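/- arXiv:1712.08097 — 6 statements merged into one kernel-verified Lean document; each statement's English description precedes it below -/
import Mathlib

section
/- For any non-negative reals x, x₀ > 0, any m ≥ 1, and reals yᵢ, zᵢ ≥ 0 with zᵢ < x for all i, the following two-sided bound holds: -(x₀/x²)·max(x₀-x,0) - (x₀/2)·max_{1≤i≤m} zᵢ/(x-zᵢ)² ≤ ∏_{i=1}^m (1 - zᵢ/x)^{yᵢ} - exp(-(1/x₀)·∑_{i=1}^m yᵢzᵢ) ≤ |x-x₀|/min(x,x₀). -/
open Finset

private lemma aux_one_sub_ge (t : ℝ) (h2 : t < 1) :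
    Real.exp (-(t / (1 - t))) ≤ 1 - t := by
  have h3 : (0:ℝ) < 1 - t := by linarith
  have h := Real.add_one_le_exp (t / (1 - t))
  have h4 : (1 - t)⁻¹ ≤ Real.exp (t / (1 - t)) := by
    have : t / (1 - t) + 1 = (1 - t)⁻¹ := by field_simp; ring
    linarith
  rw [Real.exp_neg]
  calc (Real.exp (t / (1 - t)))⁻¹ ≤ ((1 - t)⁻¹)⁻¹ := inv_anti₀ (by positivity) h4
    _ = 1 - t := inv_inv _

private lemma aux_prod_ub (m : ℕ) (x : ℝ) (hx : 0 < x)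
    (y : Fin m → ℕ) (z : Fin m → ℝ) (hz : ∀ i, 0 ≤ z i) (hzx : ∀ i, z i < x) :
    (∏ i, (1 - z i / x) ^ (y i)) ≤ Real.exp (-((∑ i, (y i : ℝ) * z i) / x)) := by
  have key : ∀ i ∈ univ, (1 - z i / x) ^ (y i) ≤ Real.exp (-(z i / x)) ^ (y i) := by
    intro i _
    apply pow_le_pow_left₀
    · have := (hzx i); have := hz i
      have : z i / x ≤ 1 := by rw [div_le_one hx]; linarith
      linarith
    · linarith [Real.add_one_le_exp (-(z i / x))]
  calc (∏ i, (1 - z i / x) ^ (y i)) ≤ ∏ i, Real.exp (-(z i / x)) ^ (y i) := by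
        apply Finset.prod_le_prod _ key
        intro i _
        apply pow_nonneg
        have : z i / x ≤ 1 := by rw [div_le_one hx]; linarith [hzx i]
        linarith
    _ = ∏ i, Real.exp (-((y i : ℝ) * z i / x)) := by
        apply Finset.prod_congr rfl
        intro i _
        rw [← Real.exp_nat_mul]
        congr 1; ring
    _ = Real.exp (∑ i, -((y i : ℝ) * z i / x)) := (Real.exp_sum _ _).symm
    _ = Real.exp (-((∑ i, (y i : ℝ) * z i) / x)) := by
        rw [Finset.sum_neg_distrib, ← Finset.sum_div]

private lemma aux_prod_lb (m : ℕ) (x M : ℝ) (hx : 0 < x) (hM : 0 ≤ M)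
    (y : Fin m → ℕ) (z : Fin m → ℝ) (hz : ∀ i, 0 ≤ z i) (hzx : ∀ i, z i < x)
    (hMi : ∀ i, z i / (x - z i) ^ 2 ≤ M) :
    Real.exp (-((∑ i, (y i : ℝ) * z i) / x + M * ∑ i, (y i : ℝ) * z i))
      ≤ (∏ i, (1 - z i / x) ^ (y i)) := by
  have hw : ∀ i, 0 < x - z i := fun i => sub_pos.mpr (hzx i)
  have hxne : x ≠ 0 := hx.ne'
  have step : ∀ i, z i / (x - z i) ≤ z i / x + M * z i := by
    intro i
    have hwne : x - z i ≠ 0 := (hw i).ne'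
    have h1 : z i ≤ M * (x - z i) ^ 2 := (div_le_iff₀ (by nlinarith [hw i])).mp (hMi i)
    have e1 : z i / x + M * z i - z i / (x - z i)
        = (M * z i * (x - z i) * x - z i ^ 2) / (x * (x - z i)) := by
      field_simp; ring
    have e2 : 0 ≤ (M * z i * (x - z i) * x - z i ^ 2) / (x * (x - z i)) := by
      apply div_nonneg _ (le_of_lt (mul_pos hx (hw i)))
      nlinarith [mul_le_mul_of_nonneg_left h1 (hz i),
        mul_nonneg (mul_nonneg (mul_nonneg hM (hz i)) (hw i).le) (hz i), hz i, hw i]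
    linarith [e1 ▸ e2]
  have term : ∀ i ∈ univ,
      Real.exp (-((y i : ℝ) * (z i / x + M * z i))) ≤ (1 - z i / x) ^ (y i) := by
    intro i _
    have hwne : x - z i ≠ 0 := (hw i).ne'
    have t1 : z i / x < 1 := (div_lt_one hx).mpr (hzx i)
    have key : Real.exp (-(z i / x + M * z i)) ≤ 1 - z i / x := by
      have e5 : (z i / x) / (1 - z i / x) = z i / (x - z i) := by
        have t0 : (0:ℝ) < 1 - z i / x := by linarith
        rw [div_eq_div_iff t0.ne' hwne]
        field_simp
      calc Real.exp (-(z i / x + M * z i))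
          ≤ Real.exp (-((z i / x) / (1 - z i / x))) := by
            apply Real.exp_le_exp.mpr
            rw [e5]
            linarith [step i]
        _ ≤ 1 - z i / x := aux_one_sub_ge _ t1
    calc Real.exp (-((y i : ℝ) * (z i / x + M * z i)))
        = Real.exp (-(z i / x + M * z i)) ^ (y i) := by
          rw [← Real.exp_nat_mul]; congr 1; ring
      _ ≤ (1 - z i / x) ^ (y i) := pow_le_pow_left₀ (Real.exp_nonneg _) key _
  have hsum : ∑ i, ((y i : ℝ) * (z i / x + M * z i))
      = (∑ i, (y i : ℝ) * z i) / x + M * ∑ i, (y i : ℝ) * z i := by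
    have e : ∀ i : Fin m, (y i : ℝ) * (z i / x + M * z i)
        = (y i : ℝ) * z i / x + M * ((y i : ℝ) * z i) := fun i => by ring
    simp_rw [e]
    rw [Finset.sum_add_distrib, ← Finset.sum_div, ← Finset.mul_sum]
  calc Real.exp (-((∑ i, (y i : ℝ) * z i) / x + M * ∑ i, (y i : ℝ) * z i))
      = Real.exp (∑ i, -((y i : ℝ) * (z i / x + M * z i))) := by
        rw [Finset.sum_neg_distrib, hsum]
    _ = ∏ i, Real.exp (-((y i : ℝ) * (z i / x + M * z i))) := Real.exp_sum _ _
    _ ≤ ∏ i, (1 - z i / x) ^ (y i) :=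
        Finset.prod_le_prod (fun i _ => Real.exp_nonneg _) term

private lemma aux_ub_end (x x₀ S : ℝ) (hx : 0 < x) (hx₀ : 0 < x₀) (hS : 0 ≤ S)
    (hxx : x₀ < x) :
    Real.exp (-(S / x)) - Real.exp (-(S / x₀)) ≤ (x - x₀) / x₀ := by
  have hconv : Real.exp (-(S / x)) - Real.exp (-(S / x₀))
      ≤ (S / x₀ - S / x) * Real.exp (-(S / x)) := by
    have h := Real.add_one_le_exp (-(S / x₀) - -(S / x))
    have h2 : Real.exp (-(S / x₀) - -(S / x)) * Real.exp (-(S / x))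
        = Real.exp (-(S / x₀)) := by
      rw [← Real.exp_add]; ring_nf
    nlinarith [Real.exp_pos (-(S / x))]
  have h1 : S / x ≤ Real.exp (S / x) := by linarith [Real.add_one_le_exp (S / x)]
  have h1' : S ≤ x * Real.exp (S / x) := (div_le_iff₀' hx).mp h1
  have h2 : Real.exp (S / x) * Real.exp (-(S / x)) = 1 := by rw [← Real.exp_add]; simp
  have hSe : S * Real.exp (-(S / x)) ≤ x := by
    nlinarith [mul_le_mul_of_nonneg_right h1' (Real.exp_pos (-(S / x))).le]
  have hfin : (S / x₀ - S / x) * Real.exp (-(S / x)) ≤ (x - x₀) / x₀ := by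
    rw [div_sub_div _ _ hx₀.ne' hx.ne', div_mul_eq_mul_div,
      div_le_div_iff₀ (mul_pos hx₀ hx) hx₀]
    nlinarith [mul_le_mul_of_nonneg_left hSe (mul_nonneg hx₀.le (sub_pos.mpr hxx).le),
      Real.exp_pos (-(S / x))]
  linarith

private lemma aux_lb_end (x x₀ S M : ℝ) (hx : 0 < x) (hx₀ : 0 < x₀) (hS : 0 ≤ S)
    (hM : 0 ≤ M) :
    Real.exp (-(S / x₀)) - Real.exp (-(S / x + M * S))
      ≤ x₀ / x ^ 2 * max (x₀ - x) 0 + x₀ / 2 * M := by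
  set e := Real.exp (-(S / x₀)) with he
  have hepos : 0 < e := Real.exp_pos _
  have hconv : Real.exp (-(S / x₀)) - Real.exp (-(S / x + M * S))
      ≤ (S / x + M * S - S / x₀) * e := by
    have h := Real.add_one_le_exp (-(S / x + M * S) - -(S / x₀))
    have h2 : Real.exp (-(S / x + M * S) - -(S / x₀)) * e
        = Real.exp (-(S / x + M * S)) := by
      rw [he, ← Real.exp_add]; ring_nf
    nlinarith [hepos]
  have h1 : 2 * (S / x₀) ≤ Real.exp (S / x₀) := by
    have h := Real.add_one_le_exp (S / x₀ / 2)
    have h2 : Real.exp (S / x₀ / 2) * Real.exp (S / x₀ / 2) = Real.exp (S / x₀) := by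
      rw [← Real.exp_add]; ring_nf
    nlinarith [Real.exp_pos (S / x₀ / 2), sq_nonneg (S / x₀ / 2 - 1)]
  have h1' : 2 * S ≤ x₀ * Real.exp (S / x₀) := by
    have h3 : 2 * S / x₀ ≤ Real.exp (S / x₀) := by rw [mul_div_assoc]; exact h1
    exact (div_le_iff₀' hx₀).mp h3
  have h2 : Real.exp (S / x₀) * e = 1 := by rw [he, ← Real.exp_add]; simp
  have hSe : 2 * (S * e) ≤ x₀ := by
    nlinarith [mul_le_mul_of_nonneg_right h1' hepos.le]
  have termM : M * (S * e) ≤ M * (x₀ / 2) :=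
    mul_le_mul_of_nonneg_left (by linarith) hM
  have term1 : (S / x - S / x₀) * e ≤ x₀ / x ^ 2 * max (x₀ - x) 0 := by
    rcases le_total x₀ x with hc | hc
    · rw [max_eq_right (by linarith)]
      have : S / x ≤ S / x₀ := div_le_div_of_nonneg_left hS hx₀ hc
      nlinarith [hepos]
    · rw [max_eq_left (by linarith)]
      rw [div_sub_div _ _ hx.ne' hx₀.ne', div_mul_eq_mul_div, div_mul_eq_mul_div,
        div_le_div_iff₀ (mul_pos hx hx₀) (by positivity : (0:ℝ) < x ^ 2)]
      nlinarith [mul_le_mul_of_nonneg_left hSe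
        (mul_nonneg (sub_nonneg.mpr hc) (sq_nonneg x)), mul_pos hx hx₀, hepos,
        mul_nonneg (mul_nonneg (mul_nonneg (sub_nonneg.mpr hc) hx₀.le) hx.le)
          (by linarith : (0:ℝ) ≤ 2 * x₀ - x)]
  have hsplit : (S / x + M * S - S / x₀) * e = (S / x - S / x₀) * e + M * (S * e) := by
    ring
  linarith [hsplit ▸ hconv]

theorem stmt0 (m : ℕ) (hm : 0 < m) (x x₀ : ℝ) (hx : 0 < x) (hx₀ : 0 < x₀)
    (y : Fin m → ℕ) (z : Fin m → ℝ) (hz : ∀ i, 0 ≤ z i) (hzx : ∀ i, z i < x) :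
    -(x₀ / x ^ 2) * max (x₀ - x) 0
        - (x₀ / 2) * (Finset.univ.sup' (Finset.univ_nonempty_iff.mpr ⟨⟨0, hm⟩⟩)
            fun i => z i / (x - z i) ^ 2)
      ≤ (∏ i, (1 - z i / x) ^ (y i)) - Real.exp (-(1 / x₀) * ∑ i, (y i : ℝ) * z i) ∧
    (∏ i, (1 - z i / x) ^ (y i)) - Real.exp (-(1 / x₀) * ∑ i, (y i : ℝ) * z i)
      ≤ |x - x₀| / min x x₀ := by
  set M := Finset.univ.sup' (Finset.univ_nonempty_iff.mpr ⟨⟨0, hm⟩⟩)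
    (fun i => z i / (x - z i) ^ 2) with hMdef
  set S := ∑ i, (y i : ℝ) * z i with hSdef
  have hS : 0 ≤ S := Finset.sum_nonneg fun i _ => mul_nonneg (Nat.cast_nonneg _) (hz i)
  have hMi : ∀ i, z i / (x - z i) ^ 2 ≤ M := by
    intro i
    rw [hMdef]
    exact Finset.le_sup' (fun j => z j / (x - z j) ^ 2) (Finset.mem_univ i)
  have hM : 0 ≤ M :=
    le_trans (div_nonneg (hz ⟨0, hm⟩) (sq_nonneg _)) (hMi ⟨0, hm⟩)
  have hE : (-(1 / x₀) * S : ℝ) = -(S / x₀) := by ring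
  rw [hE]
  have hub := aux_prod_ub m x hx y z hz hzx
  have hlb := aux_prod_lb m x M hx hM y z hz hzx hMi
  rw [← hSdef] at hub hlb
  constructor
  · have := aux_lb_end x x₀ S M hx hx₀ hS hM
    linarith
  · rcases le_or_gt x x₀ with hc | hc
    · have h1 : Real.exp (-(S / x)) ≤ Real.exp (-(S / x₀)) :=
        Real.exp_le_exp.mpr (neg_le_neg (div_le_div_of_nonneg_left hS hx hc))
      have h2 : 0 ≤ |x - x₀| / min x x₀ :=
        div_nonneg (abs_nonneg _) (le_of_lt (lt_min hx hx₀))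
      linarith
    · rw [min_eq_right hc.le, abs_of_pos (sub_pos.mpr hc)]
      have := aux_ub_end x x₀ S hx hx₀ hS hc
      linarith
end

section
/- Let X be a non-negative regularly-varying random variable with exponent 1 < γ < 2 and slowly varying function L, i.e. P(X > t) = L(t)t^{-γ}. Then E[X·min(1, X/t)] is asymptotically equivalent, as t → ∞, to (γ/((γ-1)(2-γ)))·L(t)·t^{1-γ}. -/
open MeasureTheory Filter

section Aux
open Set Real

private lemma aux_floor_pow {b : ℝ} (hb : 1 ≤ b) :
    ∃ n : ℕ, (2:ℝ)^n ≤ b ∧ b < 2^(n+1) := by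
  refine ⟨⌊Real.logb 2 b⌋₊, ?_, ?_⟩
  · have h1 : ((⌊Real.logb 2 b⌋₊ : ℝ)) ≤ Real.logb 2 b :=
      Nat.floor_le (Real.logb_nonneg one_lt_two hb)
    have := Real.rpow_le_rpow_of_exponent_le one_le_two h1
    rwa [Real.rpow_logb two_pos (by norm_num) (lt_of_lt_of_le one_pos hb),
      Real.rpow_natCast] at this
  · have h2 : Real.logb 2 b < (⌊Real.logb 2 b⌋₊ : ℝ) + 1 := Nat.lt_floor_add_one _
    have := Real.rpow_lt_rpow_of_exponent_lt one_lt_two h2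
    rw [Real.rpow_logb two_pos (by norm_num) (lt_of_lt_of_le one_pos hb)] at this
    calc b < (2:ℝ) ^ ((⌊Real.logb 2 b⌋₊ : ℝ) + 1) := this
    _ = 2 ^ (⌊Real.logb 2 b⌋₊ + 1) := by
        rw [← Real.rpow_natCast (2:ℝ) (⌊Real.logb 2 b⌋₊ + 1)]
        push_cast
        ring_nf

private lemma chain_up {G : ℝ → ℝ} {T r : ℝ} (hGnn : ∀ s, 0 ≤ G s)
    (h : ∀ s ≥ T, G (2*s) ≤ r * G s) (hr : 0 ≤ r) (hT : 0 < T) :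
    ∀ n : ℕ, ∀ t ≥ T, G (2^n * t) ≤ r^n * G t := by
  intro n
  induction n with
  | zero => intro t _; simp
  | succ n ih =>
    intro t ht
    have h2n : (1:ℝ) ≤ 2^n := one_le_pow₀ one_le_two
    have ht2 : T ≤ 2^n * t := le_trans ht (le_mul_of_one_le_left (le_trans hT.le ht) h2n)
    calc G (2^(n+1) * t) = G (2 * (2^n * t)) := by ring_nf
    _ ≤ r * G (2^n * t) := h _ ht2
    _ ≤ r * (r^n * G t) := by
        exact mul_le_mul_of_nonneg_left (ih t ht) hr
    _ = r^(n+1) * G t := by ring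

private lemma chain_down {G : ℝ → ℝ} {T r : ℝ} (hGnn : ∀ s, 0 ≤ G s)
    (h : ∀ s ≥ T, G (s/2) ≤ r * G s) (hr : 0 ≤ r) (hT : 0 < T) :
    ∀ n : ℕ, ∀ t, T * 2^n ≤ t → G (t / 2^n) ≤ r^n * G t := by
  intro n
  induction n with
  | zero => intro t _; simp
  | succ n ih =>
    intro t ht
    have h2n : (0:ℝ) < 2^n := by positivity
    have hexp : (2:ℝ)^(n+1) = 2^n * 2 := pow_succ 2 n
    have ht' : T * 2^n ≤ t := by nlinarith
    have hs : T ≤ t / 2^n := (le_div_iff₀ h2n).2 ht'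
    have hs2 : T ≤ t / 2^n := hs
    calc G (t / 2^(n+1)) = G ((t / 2^n)/2) := by rw [div_div]; ring_nf
    _ ≤ r * G (t / 2^n) := h _ hs
    _ ≤ r * (r^n * G t) := mul_le_mul_of_nonneg_left (ih t ht') hr
    _ = r^(n+1) * G t := by ring

end Aux

set_option maxHeartbeats 4000000 in
theorem stmt2 {Ω : Type*} [MeasurableSpace Ω] (P : Measure Ω) [IsProbabilityMeasure P]
    (X : Ω → ℝ) (hmeas : Measurable X) (hnonneg : ∀ ω, 0 ≤ X ω)
    (L : ℝ → ℝ) (hLpos : ∀ t > (0:ℝ), 0 < L t)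
    (hL : ∀ c > (0:ℝ), Tendsto (fun t => L (c * t) / L t) atTop (nhds 1))
    (γ : ℝ) (hγ1 : 1 < γ) (hγ2 : γ < 2)
    (htail : ∀ t > (0:ℝ), (P {ω | X ω > t}).toReal = L t * t ^ (-γ)) :
    Tendsto (fun t => (∫ ω, X ω * min 1 (X ω / t) ∂P) /
      (γ / ((γ - 1) * (2 - γ)) * L t * t ^ (1 - γ))) atTop (nhds 1) := by
  classical
  open Set in
  -- basic facts about the tail function G
  set G : ℝ → ℝ := fun s => (P {ω | X ω > s}).toReal with hGdef
  have hPfin : ∀ s : ℝ, P {ω | X ω > s} ≠ ⊤ := fun s => measure_ne_top P _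
  have hGanti : Antitone G := by
    intro s s' hss'
    apply ENNReal.toReal_le_toReal (hPfin _) (hPfin _) |>.2
    exact measure_mono (fun ω hω => lt_of_le_of_lt hss' hω)
  have hGmeas : Measurable G := hGanti.measurable
  have hG0 : ∀ s, 0 ≤ G s := fun s => ENNReal.toReal_nonneg
  have hG1 : ∀ s, G s ≤ 1 := by
    intro s
    rw [hGdef]
    simp only
    rw [show (1:ℝ) = (1 : ENNReal).toReal by simp]
    exact ENNReal.toReal_le_toReal (hPfin s) (by simp) |>.2 prob_le_one
  have hGL : ∀ t > (0:ℝ), G t = L t * t ^ (-γ) := htail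
  have hGpos : ∀ t > (0:ℝ), 0 < G t := by
    intro t ht
    rw [hGL t ht]
    exact mul_pos (hLpos t ht) (Real.rpow_pos_of_pos ht _)
  -- ratio limit for G
  have hratio : ∀ v > (0:ℝ), Tendsto (fun t => G (t * v) / G t) atTop (nhds (v ^ (-γ))) := by
    intro v hv
    have key : ∀ᶠ t in atTop, (L (v * t) / L t) * v ^ (-γ) = G (t * v) / G t := by
      filter_upwards [eventually_gt_atTop 0] with t ht
      have htv : 0 < t * v := mul_pos ht hv
      rw [hGL _ htv, hGL _ ht, Real.mul_rpow ht.le hv.le, mul_comm t v]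
      have h1 : L t ≠ 0 := (hLpos t ht).ne'
      have h2 : t ^ (-γ) ≠ 0 := (Real.rpow_pos_of_pos ht _).ne'
      field_simp
    have h0 := (hL v hv).mul_const (v ^ (-γ))
    rw [one_mul] at h0
    exact h0.congr' key
  -- exponents
  set ρ : ℝ := (γ + 2)/2 with hρdef
  set σ : ℝ := (γ + 1)/2 with hσdef
  have hργ : γ < ρ := by rw [hρdef]; linarith
  have hρ2 : ρ < 2 := by rw [hρdef]; linarith
  have hσ1 : 1 < σ := by rw [hσdef]; linarith
  have hσγ : σ < γ := by rw [hσdef]; linarith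
  -- eventual lower bound: L t * t ^ (ρ - γ) bounded below
  have hlow : ∃ δ > (0:ℝ), ∃ T₁ ≥ (1:ℝ), ∀ t ≥ T₁, δ ≤ L t * t ^ (ρ - γ) := by
    set ε : ℝ := ρ - γ with hεdef
    have hε : (0:ℝ) < ε := by simp only [hεdef]; linarith
    set r : ℝ := 2 ^ (-(ε/2)) with hrdef
    have hr0 : 0 < r := Real.rpow_pos_of_pos two_pos _
    have hr1 : r < 1 := Real.rpow_lt_one_of_one_lt_of_neg one_lt_two (by linarith)
    have hev : ∀ᶠ s in atTop, r ≤ L (2 * s) / L s :=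
      (hL 2 two_pos).eventually (eventually_ge_nhds hr1)
    obtain ⟨t₀', ht₀'⟩ := eventually_atTop.1 hev
    set t₀ : ℝ := max t₀' 1 with ht₀def
    have ht₀1 : (1:ℝ) ≤ t₀ := le_max_right _ _
    have ht₀0 : (0:ℝ) < t₀ := lt_of_lt_of_le one_pos ht₀1
    have hstep : ∀ s ≥ t₀, r * L s ≤ L (2 * s) := by
      intro s hs
      have hs1 : (1:ℝ) ≤ s := le_trans ht₀1 hs
      have := ht₀' s (le_trans (le_max_left _ _) hs)
      calc r * L s ≤ (L (2*s) / L s) * L s :=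
        mul_le_mul_of_nonneg_right this (le_of_lt (hLpos s (by linarith)))
      _ = L (2*s) := div_mul_cancel₀ _ (hLpos s (by linarith)).ne'
    -- induction along powers of 2
    have hind : ∀ n : ℕ, r ^ n * L t₀ ≤ L (2 ^ n * t₀) := by
      intro n
      induction n with
      | zero => simp
      | succ n ih =>
        have h2n : (1:ℝ) ≤ 2 ^ n := one_le_pow₀ one_le_two
        have hge : t₀ ≤ 2 ^ n * t₀ := le_mul_of_one_le_left ht₀0.le h2n
        calc r ^ (n+1) * L t₀ = r * (r ^ n * L t₀) := by ring
        _ ≤ r * L (2 ^ n * t₀) := mul_le_mul_of_nonneg_left ih hr0.le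
        _ ≤ L (2 * (2 ^ n * t₀)) := hstep _ hge
        _ = L (2 ^ (n+1) * t₀) := by ring_nf
    have hδ0 : 0 < L t₀ * t₀ ^ ε * (2 ^ (-γ) * r) :=
      mul_pos (mul_pos (hLpos t₀ ht₀0) (Real.rpow_pos_of_pos ht₀0 ε))
        (mul_pos (Real.rpow_pos_of_pos two_pos _) hr0)
    refine ⟨L t₀ * t₀ ^ ε * (2 ^ (-γ) * r), hδ0, t₀, ht₀1, ?_⟩
    intro t ht
    have ht0 : (0:ℝ) < t := lt_of_lt_of_le ht₀0 ht
    obtain ⟨n, hn1, hn2⟩ := aux_floor_pow (b := t / t₀) ((one_le_div ht₀0).2 ht)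
    rw [le_div_iff₀ ht₀0] at hn1
    rw [div_lt_iff₀ ht₀0] at hn2
    have h2n0 : (0:ℝ) < 2 ^ n := by positivity
    have h2n1 : (1:ℝ) ≤ 2 ^ n := one_le_pow₀ one_le_two
    -- main chain
    have e1 : L t * t ^ ε = G t * t ^ (γ + ε) := by
      rw [hGL t ht0, mul_assoc, ← Real.rpow_add ht0,
        show -γ + (γ + ε) = ε from by ring]
    have e2 : G t * t ^ (γ + ε) ≥ G (2 ^ (n+1) * t₀) * (2 ^ n * t₀) ^ (γ + ε) := by
      apply mul_le_mul
      · exact hGanti hn2.le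
      · exact Real.rpow_le_rpow (by positivity) hn1 (by linarith)
      · positivity
      · exact hG0 _
    have hpt : (0:ℝ) < 2 ^ (n+1) * t₀ := by positivity
    have e3 : G (2 ^ (n+1) * t₀) = L (2 ^ (n+1) * t₀) * (2 ^ (n+1) * t₀) ^ (-γ) := hGL _ hpt
    have e4 : r ^ (n+1) * L t₀ ≤ L (2 ^ (n+1) * t₀) := hind (n+1)
    -- power computation
    have hs0 : (0:ℝ) < 2 ^ n * t₀ := by positivity
    have hsplit : ((2:ℝ) ^ (n+1) * t₀) ^ (-γ) * (2 ^ n * t₀) ^ (γ + ε)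
        = 2 ^ (-γ) * (((2:ℝ) ^ n : ℝ) ^ ε * t₀ ^ ε) := by
      calc ((2:ℝ) ^ (n+1) * t₀) ^ (-γ) * (2 ^ n * t₀) ^ (γ + ε)
          = ((2:ℝ) * (2 ^ n * t₀)) ^ (-γ) * (2 ^ n * t₀) ^ (γ + ε) := by
            rw [show (2:ℝ)^(n+1) * t₀ = 2*(2^n*t₀) from by ring]
        _ = 2 ^ (-γ) * ((2 ^ n * t₀) ^ (-γ) * (2 ^ n * t₀) ^ (γ + ε)) := by
            rw [Real.mul_rpow (by norm_num) hs0.le]; ring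
        _ = 2 ^ (-γ) * (2 ^ n * t₀) ^ ε := by
            rw [← Real.rpow_add hs0, show -γ + (γ + ε) = ε from by ring]
        _ = 2 ^ (-γ) * (((2:ℝ) ^ n) ^ ε * t₀ ^ ε) := by
            rw [Real.mul_rpow h2n0.le ht₀0.le]
    have hrn : r ^ n * ((2:ℝ) ^ n) ^ ε ≥ 1 := by
      have : r ^ n = ((2:ℝ) ^ n) ^ (-(ε/2)) := by
        rw [hrdef, ← Real.rpow_natCast ((2:ℝ) ^ (-(ε/2))) n, ← Real.rpow_natCast (2:ℝ) n,
          ← Real.rpow_mul (by norm_num), ← Real.rpow_mul (by norm_num)]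
        ring_nf
      rw [this, ← Real.rpow_add h2n0]
      apply Real.one_le_rpow h2n1 (by linarith)
    calc L t₀ * t₀ ^ ε * (2 ^ (-γ) * r)
        ≤ L t₀ * t₀ ^ ε * (2 ^ (-γ) * r) * (r ^ n * ((2:ℝ) ^ n) ^ ε) :=
          le_mul_of_one_le_right hδ0.le hrn
      _ = (r ^ (n+1) * L t₀) * (2 ^ (-γ) * (((2:ℝ) ^ n) ^ ε * t₀ ^ ε)) := by ring
      _ ≤ L (2 ^ (n+1) * t₀) * (2 ^ (-γ) * (((2:ℝ) ^ n) ^ ε * t₀ ^ ε)) := by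
          apply mul_le_mul_of_nonneg_right e4
          positivity
      _ = G (2 ^ (n+1) * t₀) * (2 ^ n * t₀) ^ (γ + ε) := by rw [e3, mul_assoc, hsplit]
      _ ≤ G t * t ^ (γ + ε) := e2
      _ = L t * t ^ ε := e1.symm
  -- Potter-type bound for small v
  have potterA : ∃ C > (0:ℝ), ∃ T ≥ (1:ℝ), ∀ t ≥ T, ∀ v ∈ Ioc (0:ℝ) 1,
      G (t * v) ≤ C * v ^ (-ρ) * G t := by
    set q : ℝ := (2:ℝ) ^ ((γ + ρ)/2) with hqdef
    have hq0 : 0 < q := Real.rpow_pos_of_pos two_pos _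
    have h2γq : (2:ℝ) ^ γ < q :=
      Real.rpow_lt_rpow_of_exponent_lt one_lt_two (by simp only [hρdef]; linarith)
    have hhalf : ((1:ℝ)/2) ^ (-γ) = 2 ^ γ := by
      rw [one_div, Real.inv_rpow (by norm_num), Real.rpow_neg (by norm_num), inv_inv]
    have hev : ∀ᶠ s in atTop, G (s * (1/2)) / G s ≤ q := by
      have h := hratio (1/2) (by norm_num)
      rw [hhalf] at h
      exact h.eventually (eventually_le_nhds h2γq)
    obtain ⟨T₀, hT₀⟩ := eventually_atTop.1 hev
    set T : ℝ := max T₀ 1 with hTdef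
    have hT1 : (1:ℝ) ≤ T := le_max_right _ _
    have hT0 : (0:ℝ) < T := lt_of_lt_of_le one_pos hT1
    have hstep : ∀ s ≥ T, G (s/2) ≤ q * G s := by
      intro s hs
      have hs0 : (0:ℝ) < s := lt_of_lt_of_le hT0 hs
      have h := hT₀ s (le_trans (le_max_left _ _) hs)
      rw [div_le_iff₀ (hGpos s hs0)] at h
      rw [mul_one_div] at h
      exact h
    have hchain := chain_down hG0 hstep hq0.le hT0
    obtain ⟨δ, hδ, T₁, hT₁1, hlb⟩ := hlow
    have h2T0 : (0:ℝ) < 2*T := by linarith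
    refine ⟨q + (2*T)^ρ/δ, by positivity, max T T₁, le_trans hT₁1 (le_max_right _ _), ?_⟩
    intro t ht v hv
    obtain ⟨hv0, hv1⟩ := hv
    have htT : T ≤ t := le_trans (le_max_left _ _) ht
    have htT₁ : T₁ ≤ t := le_trans (le_max_right _ _) ht
    have ht0 : (0:ℝ) < t := lt_of_lt_of_le hT0 htT
    have hvρ : (0:ℝ) < v ^ (-ρ) := Real.rpow_pos_of_pos hv0 _
    have hCδ : (0:ℝ) < (2*T)^ρ/δ := by positivity
    by_cases hcase : 2*T ≤ t*v
    · -- chain case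
      obtain ⟨n, hn1, hn2⟩ := aux_floor_pow (b := 1/v)
        (by rw [le_div_iff₀ hv0, one_mul]; exact hv1)
      have h2n0 : (0:ℝ) < 2^n := by positivity
      have h2n10 : (0:ℝ) < 2^(n+1) := by positivity
      have hv2n : v * 2^n ≤ 1 := by
        have := (le_div_iff₀ hv0).1 hn1
        linarith
      have hv2n1 : 1 ≤ v * 2^(n+1) := by
        have := (div_lt_iff₀ hv0).1 hn2
        linarith
      have hcond : T * 2^(n+1) ≤ t := by
        have e : (2:ℝ)^(n+1) = 2^n * 2 := pow_succ 2 n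
        have h1 : 2*T*2^n ≤ t*v*2^n := mul_le_mul_of_nonneg_right hcase h2n0.le
        have h2 : t*(v*2^n) ≤ t*1 := mul_le_mul_of_nonneg_left hv2n ht0.le
        nlinarith
      have hmono : G (t*v) ≤ G (t / 2^(n+1)) := by
        apply hGanti
        rw [div_le_iff₀ h2n10]
        have h2 : t*1 ≤ t*(v*2^(n+1)) := mul_le_mul_of_nonneg_left hv2n1 ht0.le
        nlinarith
      have hch := hchain (n+1) t hcond
      have hqn : q^(n+1) ≤ q * v^(-ρ) := by
        have e1 : q^(n+1) = ((2:ℝ)^(n+1) : ℝ) ^ ((γ+ρ)/2) := by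
          rw [hqdef, ← Real.rpow_natCast ((2:ℝ) ^ ((γ+ρ)/2)) (n+1),
            ← Real.rpow_mul (by norm_num), ← Real.rpow_natCast (2:ℝ) (n+1),
            ← Real.rpow_mul (by norm_num), mul_comm]
        have e2 : ((2:ℝ)^(n+1) : ℝ) ^ ((γ+ρ)/2) ≤ ((2:ℝ)/v) ^ ((γ+ρ)/2) := by
          apply Real.rpow_le_rpow h2n10.le ?_ (by simp only [hρdef]; linarith)
          rw [pow_succ]
          have := (le_div_iff₀ hv0).1 hn1
          calc (2:ℝ)^n * 2 ≤ (1/v) * 2 := mul_le_mul_of_nonneg_right hn1 (by norm_num)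
          _ = 2/v := by ring
        have e3 : ((2:ℝ)/v) ^ ((γ+ρ)/2) = q * v^(-((γ+ρ)/2)) := by
          rw [Real.div_rpow (by norm_num) hv0.le, Real.rpow_neg hv0.le, div_eq_mul_inv]
        have e4 : v ^ (-((γ+ρ)/2)) ≤ v^(-ρ) :=
          Real.rpow_le_rpow_of_exponent_ge hv0 hv1 (by simp only [hρdef]; linarith)
        calc q^(n+1) = ((2:ℝ)^(n+1) : ℝ) ^ ((γ+ρ)/2) := e1
        _ ≤ ((2:ℝ)/v) ^ ((γ+ρ)/2) := e2
        _ = q * v^(-((γ+ρ)/2)) := e3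
        _ ≤ q * v^(-ρ) := mul_le_mul_of_nonneg_left e4 hq0.le
      calc G (t*v) ≤ G (t/2^(n+1)) := hmono
      _ ≤ q^(n+1) * G t := hch
      _ ≤ (q * v^(-ρ)) * G t := mul_le_mul_of_nonneg_right hqn (hG0 t)
      _ ≤ (q + (2*T)^ρ/δ) * v^(-ρ) * G t := by
          nlinarith [mul_nonneg (mul_nonneg hCδ.le hvρ.le) (hG0 t)]
    · -- boundary case
      push_neg at hcase
      have hvle : v ≤ 2*T/t := by
        rw [le_div_iff₀ ht0]
        nlinarith
      have hb1 : ((2*T)/t) ^ (-ρ) ≤ v ^ (-ρ) :=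
        Real.rpow_le_rpow_of_nonpos hv0 hvle (by simp only [hρdef]; linarith)
      have heq : ((2*T)/t) ^ (-ρ) = (2*T) ^ (-ρ) * t ^ ρ := by
        rw [Real.div_rpow h2T0.le ht0.le, Real.rpow_neg ht0.le, div_eq_mul_inv, inv_inv]
      have hone : (1:ℝ) ≤ ((2*T)^ρ/δ) * (((2*T)/t) ^ (-ρ)) * G t := by
        rw [heq, hGL t ht0]
        have e6 : (2*T)^ρ/δ * ((2*T)^(-ρ) * t^ρ) * (L t * t^(-γ))
            = (L t * (t^ρ * t^(-γ)))/δ := by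
          rw [Real.rpow_neg h2T0.le]
          field_simp [(Real.rpow_pos_of_pos h2T0 ρ).ne']
        rw [e6, ← Real.rpow_add ht0, show ρ + -γ = ρ - γ from by ring]
        exact (one_le_div hδ).2 (hlb t htT₁)
      have hfin : ((2*T)^ρ/δ) * (((2*T)/t) ^ (-ρ)) * G t
          ≤ ((2*T)^ρ/δ) * v^(-ρ) * G t :=
        mul_le_mul_of_nonneg_right (mul_le_mul_of_nonneg_left hb1 hCδ.le) (hG0 t)
      calc G (t*v) ≤ 1 := hG1 _
      _ ≤ ((2*T)^ρ/δ) * v^(-ρ) * G t := le_trans hone hfin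
      _ ≤ (q + (2*T)^ρ/δ) * v^(-ρ) * G t := by
          nlinarith [mul_nonneg (mul_nonneg hq0.le hvρ.le) (hG0 t)]
  -- Potter-type bound for large v
  have potterB : ∃ C > (0:ℝ), ∃ T ≥ (1:ℝ), ∀ t ≥ T, ∀ v ≥ (1:ℝ),
      G (t * v) ≤ C * v ^ (-σ) * G t := by
    set c : ℝ := (γ + σ)/2 with hcdef
    set q : ℝ := (2:ℝ) ^ (-c) with hqdef
    have hq0 : 0 < q := Real.rpow_pos_of_pos two_pos _
    have h2γq : (2:ℝ) ^ (-γ) < q :=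
      Real.rpow_lt_rpow_of_exponent_lt one_lt_two (by simp only [hcdef, hσdef]; linarith)
    have hev : ∀ᶠ s in atTop, G (s * 2) / G s ≤ q :=
      (hratio 2 two_pos).eventually (eventually_le_nhds h2γq)
    obtain ⟨T₀, hT₀⟩ := eventually_atTop.1 hev
    set T : ℝ := max T₀ 1 with hTdef
    have hT1 : (1:ℝ) ≤ T := le_max_right _ _
    have hT0 : (0:ℝ) < T := lt_of_lt_of_le one_pos hT1
    have hstep : ∀ s ≥ T, G (2*s) ≤ q * G s := by
      intro s hs
      have hs0 : (0:ℝ) < s := lt_of_lt_of_le hT0 hs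
      have h := hT₀ s (le_trans (le_max_left _ _) hs)
      rw [div_le_iff₀ (hGpos s hs0)] at h
      rw [mul_comm 2 s]
      exact h
    have hchain := chain_up hG0 hstep hq0.le hT0
    refine ⟨q⁻¹, by positivity, T, hT1, ?_⟩
    intro t ht v hv1
    have hv0 : (0:ℝ) < v := lt_of_lt_of_le one_pos hv1
    have ht0 : (0:ℝ) < t := lt_of_lt_of_le hT0 ht
    obtain ⟨n, hn1, hn2⟩ := aux_floor_pow (b := v) hv1
    have h2n0 : (0:ℝ) < 2^n := by positivity
    have hmono : G (t*v) ≤ G (2^n * t) := by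
      apply hGanti
      have := mul_le_mul_of_nonneg_left hn1 ht0.le
      nlinarith
    have hch := hchain n t ht
    have hqn : q^n ≤ q⁻¹ * v^(-σ) := by
      have e1 : q^n = (((2:ℝ)^n : ℝ)) ^ (-c) := by
        rw [hqdef, ← Real.rpow_natCast ((2:ℝ) ^ (-c)) n, ← Real.rpow_mul (by norm_num),
          ← Real.rpow_natCast (2:ℝ) n, ← Real.rpow_mul (by norm_num), mul_comm]
      have hv2 : v/2 ≤ 2^n := by
        have := pow_succ (2:ℝ) n
        linarith
      have e2 : (((2:ℝ)^n : ℝ)) ^ (-c) ≤ (v/2) ^ (-c) :=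
        Real.rpow_le_rpow_of_nonpos (by positivity) hv2
          (by simp only [hcdef, hσdef]; linarith)
      have e3 : ((v:ℝ)/2) ^ (-c) = q⁻¹ * v ^ (-c) := by
        rw [Real.div_rpow hv0.le (by norm_num), hqdef, div_eq_mul_inv, mul_comm,
          Real.rpow_neg (by norm_num : (0:ℝ) ≤ 2), inv_inv]
      have e4 : v ^ (-c) ≤ v ^ (-σ) :=
        Real.rpow_le_rpow_of_exponent_le hv1 (by simp only [hcdef, hσdef]; linarith)
      calc q^n = (((2:ℝ)^n : ℝ)) ^ (-c) := e1
      _ ≤ (v/2) ^ (-c) := e2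
      _ = q⁻¹ * v ^ (-c) := e3
      _ ≤ q⁻¹ * v ^ (-σ) := mul_le_mul_of_nonneg_left e4 (by positivity)
    calc G (t*v) ≤ G (2^n * t) := hmono
    _ ≤ q^n * G t := hch
    _ ≤ (q⁻¹ * v^(-σ)) * G t := mul_le_mul_of_nonneg_right hqn (hG0 t)
    _ = q⁻¹ * v^(-σ) * G t := by ring
  obtain ⟨CA, hCA, TA, hTA1, hA⟩ := potterA
  obtain ⟨CB, hCB, TB, hTB1, hB⟩ := potterB
  -- dominated convergence, part A
  have hIA : Tendsto (fun t => ∫ v in Ioc (0:ℝ) 1, (v * G (t * v)) / G t) atTop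
      (nhds (1/(2-γ))) := by
    have hval : ∫ v in Ioc (0:ℝ) 1, v ^ (1-γ) = 1/(2-γ) := by
      rw [← intervalIntegral.integral_of_le (zero_le_one), integral_rpow (Or.inl (by linarith)),
        Real.one_rpow, Real.zero_rpow (show (1:ℝ)-γ+1 ≠ 0 by intro h; linarith),
        show (1:ℝ)-γ+1 = 2-γ from by ring]
      norm_num
    rw [← hval]
    have hTA0 : (0:ℝ) < TA := lt_of_lt_of_le one_pos hTA1
    apply tendsto_integral_filter_of_dominated_convergence
      (bound := fun v => CA * v ^ (1-ρ))
    · apply Eventually.of_forall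
      intro t
      exact ((measurable_id.mul (hGmeas.comp (measurable_id.const_mul t))).div_const
        (G t)).aestronglyMeasurable
    · filter_upwards [eventually_ge_atTop TA] with t ht
      rw [ae_restrict_iff' measurableSet_Ioc]
      apply Eventually.of_forall
      intro v hv
      obtain ⟨hv0, hv1⟩ := hv
      have ht0 : (0:ℝ) < t := lt_of_lt_of_le hTA0 ht
      have hGt := hGpos t ht0
      have hvv : v * v^(-ρ) = v^(1-ρ) := by
        rw [show (1:ℝ)-ρ = 1 + (-ρ) from by ring, Real.rpow_add hv0, Real.rpow_one]
      rw [Real.norm_eq_abs, abs_of_nonneg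
        (div_nonneg (mul_nonneg hv0.le (hG0 _)) (hG0 _)), div_le_iff₀ hGt]
      calc v * G (t*v) ≤ v * (CA * v^(-ρ) * G t) :=
        mul_le_mul_of_nonneg_left (hA t ht v ⟨hv0, hv1⟩) hv0.le
      _ = CA * (v * v^(-ρ)) * G t := by ring
      _ = CA * v^(1-ρ) * G t := by rw [hvv]
    · exact ((intervalIntegrable_iff_integrableOn_Ioc_of_le zero_le_one).1
        (intervalIntegral.intervalIntegrable_rpow' (by linarith))).const_mul CA
    · rw [ae_restrict_iff' measurableSet_Ioc]
      apply Eventually.of_forall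
      intro v hv
      obtain ⟨hv0, hv1⟩ := hv
      have h := (hratio v hv0).const_mul v
      have hvv : v * v^(-γ) = v^(1-γ) := by
        rw [show (1:ℝ)-γ = 1 + (-γ) from by ring, Real.rpow_add hv0, Real.rpow_one]
      rw [hvv] at h
      refine h.congr (fun t => ?_)
      rw [mul_div_assoc]
  -- dominated convergence, part B
  have hIB : Tendsto (fun t => ∫ v in Ioi (1:ℝ), G (t * v) / G t) atTop
      (nhds (1/(γ-1))) := by
    have hval : ∫ v in Ioi (1:ℝ), v ^ (-γ) = 1/(γ-1) := by
      rw [integral_Ioi_rpow_of_lt (by linarith) one_pos, Real.one_rpow,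
        div_eq_div_iff (by intro h; linarith) (by intro h; linarith)]
      ring
    rw [← hval]
    have hTB0 : (0:ℝ) < TB := lt_of_lt_of_le one_pos hTB1
    apply tendsto_integral_filter_of_dominated_convergence
      (bound := fun v => CB * v ^ (-σ))
    · apply Eventually.of_forall
      intro t
      exact ((hGmeas.comp (measurable_id.const_mul t)).div_const (G t)).aestronglyMeasurable
    · filter_upwards [eventually_ge_atTop TB] with t ht
      rw [ae_restrict_iff' measurableSet_Ioi]
      apply Eventually.of_forall
      intro v hv
      have hv1 : (1:ℝ) ≤ v := le_of_lt hv
      have ht0 : (0:ℝ) < t := lt_of_lt_of_le hTB0 ht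
      have hGt := hGpos t ht0
      rw [Real.norm_eq_abs, abs_of_nonneg (div_nonneg (hG0 _) (hG0 _)), div_le_iff₀ hGt]
      exact hB t ht v hv1
    · exact ((integrableOn_Ioi_rpow_of_lt (by linarith) one_pos).const_mul CB)
    · rw [ae_restrict_iff' measurableSet_Ioi]
      apply Eventually.of_forall
      intro v hv
      exact hratio v (lt_trans one_pos hv)
  -- integrability of G on tails
  have hGint : ∀ t ≥ TB, IntegrableOn G (Ioi t) := by
    intro t ht
    have ht0 : (0:ℝ) < t := lt_of_lt_of_le (lt_of_lt_of_le one_pos hTB1) ht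
    have hbd : ∀ u ∈ Ioi t, ‖G u‖ ≤ (CB * G t * t ^ σ) * u ^ (-σ) := by
      intro u hu
      have htu : t < u := hu
      have hu0 : (0:ℝ) < u := lt_trans ht0 htu
      have hv1 : (1:ℝ) ≤ u / t := (one_le_div ht0).2 htu.le
      have hGb := hB t ht (u/t) hv1
      rw [mul_comm t (u/t), div_mul_cancel₀ u ht0.ne'] at hGb
      have heq : (u/t) ^ (-σ) = u ^ (-σ) * t ^ σ := by
        rw [Real.div_rpow hu0.le ht0.le, Real.rpow_neg ht0.le, div_eq_mul_inv, inv_inv]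
      rw [Real.norm_eq_abs, abs_of_nonneg (hG0 u)]
      calc G u ≤ CB * (u/t)^(-σ) * G t := hGb
      _ = (CB * G t * t ^ σ) * u ^ (-σ) := by rw [heq]; ring
    apply Integrable.mono'
      ((integrableOn_Ioi_rpow_of_lt (show -σ < -1 by linarith) ht0).const_mul (CB * G t * t ^ σ))
      hGmeas.aestronglyMeasurable
    exact (ae_restrict_iff' measurableSet_Ioi).2 (Eventually.of_forall hbd)
  -- layer cake identity
  have hlayer : ∀ t ≥ max TB 1, ∫ ω, X ω * min 1 (X ω / t) ∂P
      = (2/t) * (∫ u in Ioc 0 t, u * G u) + ∫ u in Ioi t, G u := by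
    intro t ht
    have ht1 : (1:ℝ) ≤ t := le_trans (le_max_right _ _) ht
    have ht0 : (0:ℝ) < t := lt_of_lt_of_le one_pos ht1
    have htB : TB ≤ t := le_trans (le_max_left _ _) ht
    set g : ℝ → ℝ := fun u => if u < t then 2*u/t else 1 with hgdef
    have hg_meas : Measurable g :=
      Measurable.ite (measurableSet_lt measurable_id measurable_const)
        ((measurable_id.const_mul 2).div_const t) measurable_const
    have hg_nn : ∀ u : ℝ, 0 ≤ u → 0 ≤ g u := by
      intro u hu
      rw [hgdef]
      dsimp only
      split
      · positivity
      · norm_num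
    have hae : ∀ᵐ u : ℝ, u ≠ t := by
      rw [ae_iff]
      have hset : {u : ℝ | ¬ u ≠ t} = {t} := by ext u; simp
      rw [hset]
      exact measure_singleton t
    have hg_int : ∀ s > (0:ℝ), IntervalIntegrable g volume 0 s := by
      intro s hs
      rw [intervalIntegrable_iff_integrableOn_Ioc_of_le hs.le]
      apply Integrable.mono' (integrableOn_const (C := 2*s/t+1)
        (by rw [Real.volume_Ioc]; exact ENNReal.ofReal_lt_top.ne))
        hg_meas.aestronglyMeasurable
      rw [ae_restrict_iff' measurableSet_Ioc]
      apply Eventually.of_forall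
      intro u hu
      rw [Real.norm_eq_abs, abs_of_nonneg (hg_nn u hu.1.le), hgdef]
      dsimp only
      have hst : 0 ≤ 2*s/t := by positivity
      split
      · have h1 : 2*u/t ≤ 2*s/t := by gcongr; exact hu.2
        linarith
      · linarith
    have hquad : ∀ x, 0 ≤ x → x ≤ t → ∫ u in (0:ℝ)..x, g u = x*x/t := by
      intro x hx hxt
      have e1 : ∫ u in (0:ℝ)..x, g u = ∫ u in (0:ℝ)..x, 2*u/t := by
        apply intervalIntegral.integral_congr_ae
        filter_upwards [hae] with u hu hmem
        rw [Set.uIoc_of_le hx] at hmem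
        rw [hgdef]
        dsimp only
        rw [if_pos (lt_of_le_of_ne (le_trans hmem.2 hxt) hu)]
      have e2 : ∫ u in (0:ℝ)..x, 2*u/t = (2/t) * ∫ u in (0:ℝ)..x, u := by
        rw [← intervalIntegral.integral_const_mul]
        apply intervalIntegral.integral_congr
        intro u _
        ring
      rw [e1, e2, integral_id]
      ring
    have hprim : ∀ x, 0 ≤ x → ∫ u in (0:ℝ)..x, g u = x * min 1 (x/t) := by
      intro x hx
      by_cases hxt : x ≤ t
      · rw [hquad x hx hxt, min_eq_right ((div_le_one ht0).2 hxt)]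
        ring
      · push_neg at hxt
        have hint1 : IntervalIntegrable g volume 0 t := hg_int t ht0
        have hint2 : IntervalIntegrable g volume t x := by
          apply (hg_int x (by linarith)).mono_set
          apply Set.uIcc_subset_uIcc
          · rw [Set.mem_uIcc]; left; exact ⟨ht0.le, hxt.le⟩
          · rw [Set.mem_uIcc]; left; exact ⟨hx, le_rfl⟩
        have hadd := intervalIntegral.integral_add_adjacent_intervals hint1 hint2
        have h2 : ∫ u in t..x, g u = x - t := by
          have e3 : ∫ u in t..x, g u = ∫ u in t..x, (1:ℝ) := by
            apply intervalIntegral.integral_congr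
            intro u hu
            rw [Set.uIcc_of_le hxt.le] at hu
            rw [hgdef]
            dsimp only
            rw [if_neg (not_lt.2 hu.1)]
          rw [e3, intervalIntegral.integral_const, smul_eq_mul, mul_one]
        rw [← hadd, hquad t ht0.le le_rfl, h2, min_eq_left ((one_le_div ht0).2 hxt.le)]
        have htt : t*t/t = t := by field_simp
        rw [htt]
        ring
    have hXmin_meas : AEStronglyMeasurable (fun ω => X ω * min 1 (X ω / t)) P :=
      (hmeas.mul (measurable_const.min (hmeas.div_const t))).aestronglyMeasurable
    have hXmin_nn : 0 ≤ᵐ[P] fun ω => X ω * min 1 (X ω / t) :=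
      Filter.Eventually.of_forall (fun ω => mul_nonneg (hnonneg ω)
        (le_min zero_le_one (div_nonneg (hnonneg ω) ht0.le)))
    have hlc := lintegral_comp_eq_lintegral_meas_lt_mul P
      (Filter.Eventually.of_forall hnonneg) hmeas.aemeasurable hg_int
      ((ae_restrict_iff' measurableSet_Ioi).2
        (Filter.Eventually.of_forall (fun u hu => hg_nn u (le_of_lt hu))))
    have hLHS : ∫⁻ ω, ENNReal.ofReal (X ω * min 1 (X ω / t)) ∂P
        = ∫⁻ ω, ENNReal.ofReal (∫ u in (0:ℝ)..X ω, g u) ∂P := by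
      apply lintegral_congr
      intro ω
      rw [hprim (X ω) (hnonneg ω)]
    have hRHS : ∫⁻ s in Ioi (0:ℝ), P {a | s < X a} * ENNReal.ofReal (g s)
        = ∫⁻ s in Ioi (0:ℝ), ENNReal.ofReal (G s * g s) := by
      apply setLIntegral_congr_fun measurableSet_Ioi
      intro s hs
      show P {a | s < X a} * ENNReal.ofReal (g s) = ENNReal.ofReal (G s * g s)
      rw [ENNReal.ofReal_mul (hG0 s), ENNReal.ofReal_toReal (hPfin s)]
    have h1 : IntegrableOn (fun s => G s * g s) (Ioc 0 t) := by
      apply Integrable.mono' (integrableOn_const (C := (2:ℝ))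
        (by rw [Real.volume_Ioc]; exact ENNReal.ofReal_lt_top.ne))
        ((hGmeas.mul hg_meas).aestronglyMeasurable)
      rw [ae_restrict_iff' measurableSet_Ioc]
      apply Filter.Eventually.of_forall
      intro u hu
      rw [Real.norm_eq_abs, Pi.mul_apply, abs_of_nonneg (mul_nonneg (hG0 u) (hg_nn u hu.1.le))]
      have hgb : g u ≤ 2 := by
        rw [hgdef]
        dsimp only
        split
        · rw [div_le_iff₀ ht0]
          nlinarith [hu.2]
        · norm_num
      calc G u * g u ≤ 1 * 2 :=
        mul_le_mul (hG1 u) hgb (hg_nn u hu.1.le) zero_le_one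
      _ = 2 := by norm_num
    have h2 : IntegrableOn (fun s => G s * g s) (Ioi t) := by
      apply (hGint t htB).congr_fun ?_ measurableSet_Ioi
      intro s hs
      rw [hgdef]
      dsimp only
      rw [if_neg (not_lt.2 (le_of_lt hs))]
      ring
    have hGg_int : Integrable (fun s => G s * g s) (volume.restrict (Ioi 0)) := by
      have hunion : Ioc (0:ℝ) t ∪ Ioi t = Ioi 0 := Set.Ioc_union_Ioi_eq_Ioi ht0.le
      rw [show (volume.restrict (Ioi (0:ℝ))) = volume.restrict (Ioc 0 t ∪ Ioi t) from by
        rw [hunion]]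
      exact (h1.union h2)
    have hGg_nn : 0 ≤ᵐ[volume.restrict (Ioi (0:ℝ))] fun s => G s * g s :=
      (ae_restrict_iff' measurableSet_Ioi).2 (Filter.Eventually.of_forall
        (fun s hs => mul_nonneg (hG0 s) (hg_nn s (le_of_lt hs))))
    have key : ∫ ω, X ω * min 1 (X ω / t) ∂P = ∫ s in Ioi 0, G s * g s := by
      rw [integral_eq_lintegral_of_nonneg_ae hXmin_nn hXmin_meas, hLHS, hlc, hRHS,
        ← ofReal_integral_eq_lintegral_ofReal hGg_int hGg_nn,
        ENNReal.toReal_ofReal (setIntegral_nonneg measurableSet_Ioi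
          (fun s hs => mul_nonneg (hG0 s) (hg_nn s (le_of_lt hs))))]
    have hsplit2 : ∫ s in Ioi (0:ℝ), G s * g s
        = (∫ s in Ioc 0 t, G s * g s) + ∫ s in Ioi t, G s * g s := by
      rw [← Set.Ioc_union_Ioi_eq_Ioi ht0.le,
        setIntegral_union (Set.Ioc_disjoint_Ioi le_rfl) measurableSet_Ioi h1 h2]
    have hpart1 : ∫ s in Ioc (0:ℝ) t, G s * g s = (2/t) * ∫ s in Ioc 0 t, s * G s := by
      rw [← integral_const_mul]
      apply setIntegral_congr_ae measurableSet_Ioc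
      filter_upwards [hae] with s hsne hmem
      rw [hgdef]
      dsimp only
      rw [if_pos (lt_of_le_of_ne hmem.2 hsne)]
      ring
    have hpart2 : ∫ s in Ioi t, G s * g s = ∫ s in Ioi t, G s := by
      apply setIntegral_congr_fun measurableSet_Ioi
      intro s hs
      rw [hgdef]
      dsimp only
      rw [if_neg (not_lt.2 (le_of_lt hs))]
      ring
    rw [key, hsplit2, hpart1, hpart2]
  -- substitution identities
  have hsubA : ∀ t > (0:ℝ), ∫ u in Ioc (0:ℝ) t, u * G u
      = t * (t * ∫ v in Ioc (0:ℝ) 1, v * G (t * v)) := by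
    intro t ht
    have h1 := intervalIntegral.integral_comp_mul_left (a := (0:ℝ)) (b := 1)
      (fun u => u * G u) ht.ne'
    rw [mul_zero, mul_one, smul_eq_mul] at h1
    have h2 : ∫ v in (0:ℝ)..1, (t*v) * G (t*v) = t * ∫ v in (0:ℝ)..1, v * G (t*v) := by
      rw [← intervalIntegral.integral_const_mul]
      apply intervalIntegral.integral_congr
      intro v _
      ring
    rw [h2] at h1
    rw [intervalIntegral.integral_of_le ht.le, intervalIntegral.integral_of_le zero_le_one] at h1
    have e5 : ∫ u in Ioc (0:ℝ) t, u * G u = t * (t⁻¹ * ∫ u in Ioc (0:ℝ) t, u * G u) := by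
      field_simp
    rw [e5, ← h1]
  have hsubB : ∀ t > (0:ℝ), ∫ u in Ioi t, G u = t * ∫ v in Ioi (1:ℝ), G (t * v) := by
    intro t ht
    have h := integral_comp_mul_left_Ioi (fun u => G u) 1 ht
    rw [mul_one, smul_eq_mul] at h
    rw [h, ← mul_assoc, mul_inv_cancel₀ ht.ne', one_mul]
  -- final assembly
  have hne1 : γ - 1 ≠ 0 := by intro h; linarith
  have hne2 : 2 - γ ≠ 0 := by intro h; linarith
  have hγ0 : γ ≠ 0 := by intro h; linarith
  have hcomb : Tendsto (fun t => (2 * (∫ v in Ioc (0:ℝ) 1, v * G (t * v) / G t)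
      + ∫ v in Ioi (1:ℝ), G (t * v) / G t) / (γ / ((γ-1)*(2-γ)))) atTop (nhds 1) := by
    have h := ((hIA.const_mul (2:ℝ)).add hIB).div_const (γ / ((γ-1)*(2-γ)))
    have hval : ((2:ℝ) * (1/(2-γ)) + 1/(γ-1)) / (γ / ((γ-1)*(2-γ))) = 1 := by
      field_simp
      ring
    rwa [hval] at h
  apply hcomb.congr'
  filter_upwards [eventually_ge_atTop (max (max TB 1) TA)] with t ht
  have htB1 : max TB 1 ≤ t := le_trans (le_max_left _ _) ht
  have htA : TA ≤ t := le_trans (le_max_right _ _) ht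
  have ht1 : (1:ℝ) ≤ t := le_trans (le_max_right _ _) htB1
  have ht0 : (0:ℝ) < t := lt_of_lt_of_le one_pos ht1
  have hGt0 : (0:ℝ) < G t := hGpos t ht0
  have hN := hlayer t htB1
  have hA' := hsubA t ht0
  have hB' := hsubB t ht0
  have hdiv1 : ∫ v in Ioc (0:ℝ) 1, v * G (t * v) / G t
      = (∫ v in Ioc (0:ℝ) 1, v * G (t * v)) / G t := integral_div _ _
  have hdiv2 : ∫ v in Ioi (1:ℝ), G (t * v) / G t
      = (∫ v in Ioi (1:ℝ), G (t * v)) / G t := integral_div _ _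
  have hLt : L t * t^(1-γ) = t * G t := by
    rw [hGL t ht0, show (1:ℝ)-γ = 1 + -γ from by ring, Real.rpow_add ht0, Real.rpow_one]
    ring
  rw [hdiv1, hdiv2, hN, hA', hB',
    show γ / ((γ-1)*(2-γ)) * L t * t^(1-γ) = γ / ((γ-1)*(2-γ)) * (L t * t^(1-γ)) from by ring,
    hLt]
  field_simp
  have e : ∫ v in Ioc (0:ℝ) 1, v * G (v * t) = ∫ v in Ioc (0:ℝ) 1, v * G (t * v) := by
    congr 1; ext v; rw [mul_comm v t]
  rw [e]
end

section
/- For every γ ∈ (1,2), the triple integral ∫₀^∞∫₀^∞∫₀^∞ (xyz)^{-γ-1}·min(xy,1)·min(xz,1)·min(yz,1) dx dy dz is finite. -/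
/-!
Cut the octant by the planes `x = 1`, `y = 1`, `z = 1`. On each of the eight boxes, bounding
`min (u, 1) ≤ u ^ e` for suitable exponents `e ∈ [0, 1]` of the three pairwise products dominates
the integrand by a monomial, and all eight monomials are dominated by `ρ x * ρ y * ρ z`, where
`ρ t = t ^ p` for `t ≤ 1` and `ρ t = t ^ q` for `t > 1`, with `p = -(γ + 2) / 4 > -1` and
`q = max (-γ) ((γ - 4) / 2) < -1`. Such a `ρ` is integrable on `(0, ∞)`, so the integral is at
most `(∫ ρ) ^ 3 < ∞`.
-/

open MeasureTheory Set

noncomputable def brokenPow (p q t : ℝ) : ℝ := if t ≤ 1 then t ^ p else t ^ q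

lemma measurable_brokenPow (p q : ℝ) : Measurable (brokenPow p q) :=
  Measurable.ite measurableSet_Iic (by fun_prop) (by fun_prop)

lemma brokenPow_nonneg (p q : ℝ) {t : ℝ} (ht : 0 ≤ t) : 0 ≤ brokenPow p q t := by
  unfold brokenPow
  split_ifs <;> exact Real.rpow_nonneg ht _

lemma rpow_le_brokenPow {p q e t : ℝ} (ht : 0 < t) (hsmall : t ≤ 1 → p ≤ e)
    (hlarge : 1 < t → e ≤ q) : t ^ e ≤ brokenPow p q t := by
  unfold brokenPow
  split_ifs with h
  · exact Real.rpow_le_rpow_of_exponent_ge ht h (hsmall h)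
  · exact Real.rpow_le_rpow_of_exponent_le (not_le.1 h).le (hlarge (not_le.1 h))

lemma integrableOn_brokenPow {p q : ℝ} (hp : -1 < p) (hq : q < -1) :
    IntegrableOn (brokenPow p q) (Ioi 0) := by
  rw [← Ioc_union_Ioi_eq_Ioi zero_le_one]
  refine IntegrableOn.union ?_ ?_
  · refine ((intervalIntegral.intervalIntegrable_rpow' hp).1).congr_fun (fun t ht => ?_)
      measurableSet_Ioc
    simp [brokenPow, ht.2]
  · refine (integrableOn_Ioi_rpow_of_lt hq one_pos).congr_fun (fun t ht => ?_) measurableSet_Ioi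
    simp [brokenPow, not_le.2 (mem_Ioi.1 ht)]

lemma min_one_le_rpow {u e : ℝ} (hu : 0 < u) (he₀ : 0 ≤ e) (he₁ : e ≤ 1) : min u 1 ≤ u ^ e := by
  rcases le_total u 1 with h | h
  · calc min u 1 ≤ u := min_le_left _ _
      _ = u ^ (1 : ℝ) := (Real.rpow_one u).symm
      _ ≤ u ^ e := Real.rpow_le_rpow_of_exponent_ge hu h he₁
  · exact (min_le_right _ _).trans (Real.one_le_rpow h he₀)

lemma rpow_mul_min_le_rpow_mul {s a b c x y z : ℝ} (hx : 0 < x) (hy : 0 < y) (hz : 0 < z)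
    (ha₀ : 0 ≤ a) (ha₁ : a ≤ 1) (hb₀ : 0 ≤ b) (hb₁ : b ≤ 1) (hc₀ : 0 ≤ c) (hc₁ : c ≤ 1) :
    (x * y * z) ^ s * min (x * y) 1 * min (x * z) 1 * min (y * z) 1
      ≤ x ^ (s + a + b) * y ^ (s + a + c) * z ^ (s + b + c) := by
  calc (x * y * z) ^ s * min (x * y) 1 * min (x * z) 1 * min (y * z) 1
      ≤ (x * y * z) ^ s * (x * y) ^ a * (x * z) ^ b * (y * z) ^ c := by
        gcongr
        exacts [min_one_le_rpow (by positivity) ha₀ ha₁, min_one_le_rpow (by positivity) hb₀ hb₁,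
          min_one_le_rpow (by positivity) hc₀ hc₁]
    _ = x ^ (s + a + b) * y ^ (s + a + c) * z ^ (s + b + c) := by
        simp only [Real.mul_rpow, Real.rpow_add, hx, hy, hz, hx.le, hy.le, hz.le,
          mul_nonneg]
        ring

lemma rpow_mul_min_le_brokenPow_of_exponents {s p q x y z : ℝ} (hx : 0 < x) (hy : 0 < y)
    (hz : 0 < z) (a b c : ℝ)
    (ha₀ : 0 ≤ a) (ha₁ : a ≤ 1) (hb₀ : 0 ≤ b) (hb₁ : b ≤ 1) (hc₀ : 0 ≤ c) (hc₁ : c ≤ 1)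
    (hxs : x ≤ 1 → p ≤ s + a + b) (hxl : 1 < x → s + a + b ≤ q)
    (hys : y ≤ 1 → p ≤ s + a + c) (hyl : 1 < y → s + a + c ≤ q)
    (hzs : z ≤ 1 → p ≤ s + b + c) (hzl : 1 < z → s + b + c ≤ q) :
    (x * y * z) ^ s * min (x * y) 1 * min (x * z) 1 * min (y * z) 1
      ≤ brokenPow p q x * brokenPow p q y * brokenPow p q z := by
  refine (rpow_mul_min_le_rpow_mul hx hy hz ha₀ ha₁ hb₀ hb₁ hc₀ hc₁).trans ?_
  have hρx := brokenPow_nonneg p q hx.le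
  have hρy := brokenPow_nonneg p q hy.le
  exact mul_le_mul (mul_le_mul (rpow_le_brokenPow hx hxs hxl) (rpow_le_brokenPow hy hys hyl)
      (by positivity) hρx) (rpow_le_brokenPow hz hzs hzl) (by positivity) (mul_nonneg hρx hρy)

lemma rpow_mul_min_le_brokenPow {γ p q x y z : ℝ} (h1 : 1 < γ) (h2 : γ < 2)
    (hp : p ≤ -(γ + 2) / 4) (hq₁ : -γ ≤ q) (hq₂ : (γ - 4) / 2 ≤ q)
    (hx : 0 < x) (hy : 0 < y) (hz : 0 < z) :
    (x * y * z) ^ (-γ - 1) * min (x * y) 1 * min (x * z) 1 * min (y * z) 1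
      ≤ brokenPow p q x * brokenPow p q y * brokenPow p q z := by
  -- any `β ∈ (γ - 1, γ / 2)` serves the boxes with exactly one coordinate above `1`
  set β := (3 * γ - 2) / 4 with hβ
  rcases le_or_gt x 1 with hx1 | hx1 <;> rcases le_or_gt y 1 with hy1 | hy1 <;>
    rcases le_or_gt z 1 with hz1 | hz1
  · apply rpow_mul_min_le_brokenPow_of_exponents hx hy hz 1 1 1 <;> intros <;> linarith
  · apply rpow_mul_min_le_brokenPow_of_exponents hx hy hz 1 β β <;> intros <;> linarith
  · apply rpow_mul_min_le_brokenPow_of_exponents hx hy hz β 1 β <;> intros <;> linarith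
  · apply rpow_mul_min_le_brokenPow_of_exponents hx hy hz 1 1 0 <;> intros <;> linarith
  · apply rpow_mul_min_le_brokenPow_of_exponents hx hy hz β β 1 <;> intros <;> linarith
  · apply rpow_mul_min_le_brokenPow_of_exponents hx hy hz 1 0 1 <;> intros <;> linarith
  · apply rpow_mul_min_le_brokenPow_of_exponents hx hy hz 0 1 1 <;> intros <;> linarith
  · apply rpow_mul_min_le_brokenPow_of_exponents hx hy hz 0 0 0 <;> intros <;> linarith

lemma lintegral_lintegral_lintegral_mul {α β δ : Type*} [MeasurableSpace α] [MeasurableSpace β]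
    [MeasurableSpace δ] {μ : Measure α} {ν : Measure β} {κ : Measure δ}
    {f : α → ENNReal} {g : β → ENNReal} {h : δ → ENNReal}
    (hf : Measurable f) (hg : Measurable g) (hh : Measurable h) :
    ∫⁻ x, ∫⁻ y, ∫⁻ z, f x * g y * h z ∂κ ∂ν ∂μ
      = (∫⁻ x, f x ∂μ) * (∫⁻ y, g y ∂ν) * ∫⁻ z, h z ∂κ := by
  simp only [lintegral_const_mul _ hh, lintegral_mul_const _ (hg.const_mul _),
    lintegral_const_mul _ hg, lintegral_mul_const _ (hf.mul_const _),
    lintegral_mul_const _ hf]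

theorem stmt3 (γ : ℝ) (h1 : 1 < γ) (h2 : γ < 2) :
    ∫⁻ x in Set.Ioi (0:ℝ), ∫⁻ y in Set.Ioi (0:ℝ), ∫⁻ z in Set.Ioi (0:ℝ),
      ENNReal.ofReal ((x * y * z) ^ (-γ - 1) * min (x * y) 1 * min (x * z) 1 * min (y * z) 1)
      < ⊤ := by
  set ρ := brokenPow (-(γ + 2) / 4) (max (-γ) ((γ - 4) / 2))
  have hρ : ∫⁻ t in Ioi 0, ENNReal.ofReal (ρ t) < ⊤ :=
    (integrableOn_brokenPow (by linarith) (max_lt (by linarith) (by linarith))).lintegral_lt_top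
  have hρm : Measurable fun t => ENNReal.ofReal (ρ t) :=
    ENNReal.measurable_ofReal.comp (measurable_brokenPow _ _)
  calc _ ≤ ∫⁻ x in Ioi 0, ∫⁻ y in Ioi 0, ∫⁻ z in Ioi 0,
        ENNReal.ofReal (ρ x) * ENNReal.ofReal (ρ y) * ENNReal.ofReal (ρ z) := by
        refine setLIntegral_mono' measurableSet_Ioi fun x hx => setLIntegral_mono'
          measurableSet_Ioi fun y hy => setLIntegral_mono' measurableSet_Ioi fun z hz => ?_
        have hρx : 0 ≤ ρ x := brokenPow_nonneg _ _ hx.out.le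
        have hρy : 0 ≤ ρ y := brokenPow_nonneg _ _ hy.out.le
        rw [← ENNReal.ofReal_mul hρx, ← ENNReal.ofReal_mul (mul_nonneg hρx hρy)]
        exact ENNReal.ofReal_le_ofReal (rpow_mul_min_le_brokenPow h1 h2 le_rfl (le_max_left _ _)
          (le_max_right _ _) hx hy hz)
    _ = (∫⁻ t in Ioi 0, ENNReal.ofReal (ρ t)) * (∫⁻ t in Ioi 0, ENNReal.ofReal (ρ t))
          * ∫⁻ t in Ioi 0, ENNReal.ofReal (ρ t) := lintegral_lintegral_lintegral_mul hρm hρm hρm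
    _ < ⊤ := ENNReal.mul_lt_top (ENNReal.mul_lt_top hρ hρ) hρ
end

section
/- For every γ ∈ (1,2), the triple integral A_γ = ∫₀^∞∫₀^∞∫₀^∞ (xyz)^{-γ-1}·(1-e^{-xy})(1-e^{-xz})(1-e^{-yz}) dx dy dz is finite. -/
/-!
Bound `1 - e^{-u} ≤ min(u, 1)` for each factor, and further `min(yz, 1) ≤ (yz)^s` for some
`s ∈ [0, 1]`. By the scaling `t ↦ ct`, `∫₀^∞ t^q min(ct, 1) dt = c^{-q-1} ∫₀^∞ u^q min(u, 1) du`,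
which is finite for `-2 < q < -1`. Integrating out `z` and then `y` this way leaves
`x^{γ-2s-1}` times a finite constant whenever `γ - 1 < s < γ`. Taking `s < γ/2` makes this
integrable on `(0, 1]`, and `s = 1` makes it integrable on `(1, ∞)`.
-/

open MeasureTheory Set
open scoped ENNReal

lemma one_sub_exp_neg_nonneg {u : ℝ} (hu : 0 ≤ u) : 0 ≤ 1 - Real.exp (-u) :=
  sub_nonneg.2 (Real.exp_le_one_iff.2 (neg_nonpos.2 hu))

lemma one_sub_exp_neg_le_min (u : ℝ) : 1 - Real.exp (-u) ≤ min u 1 :=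
  le_min (by linarith [Real.add_one_le_exp (-u)]) (by linarith [Real.exp_nonneg (-u)])

lemma min_one_le_rpow_s4 {u s : ℝ} (hu : 0 ≤ u) (hs₀ : 0 ≤ s) (hs₁ : s ≤ 1) :
    min u 1 ≤ u ^ s := by
  rcases le_total u 1 with h | h
  · exact (min_le_left _ _).trans
      (by simpa using Real.rpow_le_rpow_of_exponent_ge' hu h hs₀ hs₁)
  · exact (min_le_right _ _).trans (Real.one_le_rpow h hs₀)

lemma integrableOn_Ioc_rpow {p : ℝ} (hp : -1 < p) : IntegrableOn (· ^ p) (Ioc (0 : ℝ) 1) :=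
  (intervalIntegrable_iff_integrableOn_Ioc_of_le zero_le_one).1
    (intervalIntegral.intervalIntegrable_rpow' hp)

lemma setLIntegral_Ioi_comp_mul_left (g : ℝ → ℝ≥0∞) {c : ℝ} (hc : 0 < c) :
    ∫⁻ t in Ioi 0, g (c * t) = ENNReal.ofReal c⁻¹ * ∫⁻ u in Ioi 0, g u := by
  have hmp : MeasurePreserving (c * ·) volume (ENNReal.ofReal |c⁻¹| • volume) :=
    ⟨measurable_const_mul c, Real.map_volume_mul_left hc.ne'⟩
  have hpre : (c * ·) ⁻¹' Ioi 0 = Ioi (0 : ℝ) := by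
    ext t
    simp [mul_pos_iff_of_pos_left hc]
  conv_lhs => rw [← hpre]
  rw [hmp.setLIntegral_comp_preimage_emb (measurableEmbedding_mulLeft₀ hc.ne'),
    Measure.restrict_smul, lintegral_smul_measure, abs_of_pos (inv_pos.2 hc)]
  rfl

lemma setLIntegral_rpow_mul_min_eq (q : ℝ) {c : ℝ} (hc : 0 < c) :
    ∫⁻ t in Ioi 0, ENNReal.ofReal (t ^ q * min (c * t) 1)
      = ENNReal.ofReal (c ^ (-q - 1)) * ∫⁻ u in Ioi 0, ENNReal.ofReal (u ^ q * min u 1) := by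
  have hscale : ∀ t ∈ Ioi (0 : ℝ), ENNReal.ofReal (t ^ q * min (c * t) 1)
      = ENNReal.ofReal (c ^ (-q)) * ENNReal.ofReal ((c * t) ^ q * min (c * t) 1) := by
    intro t ht
    rw [← ENNReal.ofReal_mul (by positivity), Real.mul_rpow hc.le (le_of_lt ht), ← mul_assoc,
      ← mul_assoc, ← Real.rpow_add hc, neg_add_cancel, Real.rpow_zero, one_mul]
  rw [setLIntegral_congr_fun measurableSet_Ioi hscale,
    lintegral_const_mul' _ _ ENNReal.ofReal_ne_top,
    setLIntegral_Ioi_comp_mul_left (fun u ↦ ENNReal.ofReal (u ^ q * min u 1)) hc, ← mul_assoc,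
    ← ENNReal.ofReal_mul (by positivity), ← Real.rpow_neg_one, ← Real.rpow_add hc,
    sub_eq_add_neg]

lemma setLIntegral_rpow_mul_min_lt_top {q : ℝ} (hq₁ : -2 < q) (hq₂ : q < -1) :
    ∫⁻ u in Ioi 0, ENNReal.ofReal (u ^ q * min u 1) < ⊤ := by
  have hnear : IntegrableOn (fun u : ℝ ↦ u ^ q * min u 1) (Ioc 0 1) := by
    refine (integrableOn_Ioc_rpow (p := q + 1) (by linarith)).congr_fun (fun u hu ↦ ?_)
      measurableSet_Ioc
    simp only [min_eq_left hu.2, Real.rpow_add_one hu.1.ne']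
  have hfar : IntegrableOn (fun u : ℝ ↦ u ^ q * min u 1) (Ioi 1) := by
    refine (integrableOn_Ioi_rpow_of_lt hq₂ one_pos).congr_fun (fun u hu ↦ ?_) measurableSet_Ioi
    simp only [min_eq_right (le_of_lt (mem_Ioi.1 hu)), mul_one]
  rw [← Ioc_union_Ioi_eq_Ioi zero_le_one]
  exact (hnear.union hfar).lintegral_lt_top

noncomputable def aIntegrand (γ x y z : ℝ) : ℝ :=
  (x * y * z) ^ (-γ - 1) * (1 - Real.exp (-(x * y))) * (1 - Real.exp (-(x * z)))
    * (1 - Real.exp (-(y * z)))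

lemma aIntegrand_le {γ s x y z : ℝ} (hs₀ : 0 ≤ s) (hs₁ : s ≤ 1) (hx : 0 < x) (hy : 0 < y)
    (hz : 0 < z) :
    aIntegrand γ x y z
      ≤ x ^ (-γ - 1) * (y ^ (s - γ - 1) * min (x * y) 1) * (z ^ (s - γ - 1) * min (x * z) 1) := by
  have hxz := one_sub_exp_neg_nonneg (mul_pos hx hz).le
  have hyz := one_sub_exp_neg_nonneg (mul_pos hy hz).le
  calc aIntegrand γ x y z
      ≤ (x * y * z) ^ (-γ - 1) * min (x * y) 1 * min (x * z) 1 * (y * z) ^ s := by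
        unfold aIntegrand
        gcongr
        · exact one_sub_exp_neg_le_min _
        · exact one_sub_exp_neg_le_min _
        · exact (one_sub_exp_neg_le_min _).trans (min_one_le_rpow_s4 (by positivity) hs₀ hs₁)
    _ = _ := by
        rw [Real.mul_rpow (by positivity) hz.le, Real.mul_rpow hx.le hy.le,
          Real.mul_rpow hy.le hz.le, sub_sub, sub_eq_add_neg s, Real.rpow_add hy,
          Real.rpow_add hz, neg_add']
        ring

lemma lintegral_lintegral_aIntegrand_le {γ s x : ℝ} (hs₀ : 0 ≤ s) (hs₁ : s ≤ 1) (hx : 0 < x) :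
    ∫⁻ y in Ioi 0, ∫⁻ z in Ioi 0, ENNReal.ofReal (aIntegrand γ x y z)
      ≤ ENNReal.ofReal (x ^ (γ - 2 * s - 1))
        * (∫⁻ u in Ioi 0, ENNReal.ofReal (u ^ (s - γ - 1) * min u 1)) ^ 2 := by
  set K := ∫⁻ u in Ioi 0, ENNReal.ofReal (u ^ (s - γ - 1) * min u 1)
  have hscale : ∫⁻ t in Ioi 0, ENNReal.ofReal (t ^ (s - γ - 1) * min (x * t) 1)
      = ENNReal.ofReal (x ^ (γ - s)) * K := by
    rw [setLIntegral_rpow_mul_min_eq _ hx, show -(s - γ - 1) - 1 = γ - s by ring]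
  calc ∫⁻ y in Ioi 0, ∫⁻ z in Ioi 0, ENNReal.ofReal (aIntegrand γ x y z)
      ≤ ∫⁻ y in Ioi 0, ∫⁻ z in Ioi 0,
          ENNReal.ofReal (x ^ (-γ - 1)) * ENNReal.ofReal (y ^ (s - γ - 1) * min (x * y) 1)
            * ENNReal.ofReal (z ^ (s - γ - 1) * min (x * z) 1) := by
        refine setLIntegral_mono' measurableSet_Ioi fun y hy ↦
          setLIntegral_mono' measurableSet_Ioi fun z hz ↦ ?_
        have hy' : 0 < y := hy
        rw [← ENNReal.ofReal_mul (by positivity), ← ENNReal.ofReal_mul (by positivity)]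
        exact ENNReal.ofReal_le_ofReal (aIntegrand_le hs₀ hs₁ hx hy hz)
    _ = ENNReal.ofReal (x ^ (-γ - 1)) * (ENNReal.ofReal (x ^ (γ - s)) * K)
          * (ENNReal.ofReal (x ^ (γ - s)) * K) := by
        have hinner : ∀ y, ∫⁻ z in Ioi 0, ENNReal.ofReal (x ^ (-γ - 1))
            * ENNReal.ofReal (y ^ (s - γ - 1) * min (x * y) 1)
            * ENNReal.ofReal (z ^ (s - γ - 1) * min (x * z) 1)
            = ENNReal.ofReal (x ^ (-γ - 1)) * ENNReal.ofReal (y ^ (s - γ - 1) * min (x * y) 1)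
              * (ENNReal.ofReal (x ^ (γ - s)) * K) := fun y ↦ by
          rw [lintegral_const_mul _ (by fun_prop), hscale]
        simp_rw [hinner]
        rw [lintegral_mul_const _ (by fun_prop), lintegral_const_mul' _ _ ENNReal.ofReal_ne_top,
          hscale]
    _ = ENNReal.ofReal (x ^ (γ - 2 * s - 1)) * K ^ 2 := by
        have hpow : x ^ (γ - 2 * s - 1) = x ^ (-γ - 1) * x ^ (γ - s) * x ^ (γ - s) := by
          rw [← Real.rpow_add hx, ← Real.rpow_add hx]
          ring_nf
        rw [hpow, ENNReal.ofReal_mul (by positivity), ENNReal.ofReal_mul (by positivity)]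
        ring

lemma setLIntegral_aIntegrand_lt_top {γ s : ℝ} {S : Set ℝ} (hS : MeasurableSet S)
    (hS₀ : S ⊆ Ioi 0) (hs₀ : 0 ≤ s) (hs₁ : s ≤ 1) (hγs : γ - 1 < s) (hsγ : s < γ)
    (hpow : ∫⁻ x in S, ENNReal.ofReal (x ^ (γ - 2 * s - 1)) < ⊤) :
    ∫⁻ x in S, ∫⁻ y in Ioi 0, ∫⁻ z in Ioi 0, ENNReal.ofReal (aIntegrand γ x y z) < ⊤ := by
  have hK := setLIntegral_rpow_mul_min_lt_top (q := s - γ - 1) (by linarith) (by linarith)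
  calc ∫⁻ x in S, ∫⁻ y in Ioi 0, ∫⁻ z in Ioi 0, ENNReal.ofReal (aIntegrand γ x y z)
      ≤ ∫⁻ x in S, ENNReal.ofReal (x ^ (γ - 2 * s - 1))
          * (∫⁻ u in Ioi 0, ENNReal.ofReal (u ^ (s - γ - 1) * min u 1)) ^ 2 :=
        setLIntegral_mono' hS fun x hx ↦ lintegral_lintegral_aIntegrand_le hs₀ hs₁ (hS₀ hx)
    _ = (∫⁻ x in S, ENNReal.ofReal (x ^ (γ - 2 * s - 1)))
          * (∫⁻ u in Ioi 0, ENNReal.ofReal (u ^ (s - γ - 1) * min u 1)) ^ 2 :=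
        lintegral_mul_const' _ _ (ENNReal.pow_ne_top hK.ne)
    _ < ⊤ := ENNReal.mul_lt_top hpow (ENNReal.pow_lt_top hK)

theorem stmt4 (γ : ℝ) (h1 : 1 < γ) (h2 : γ < 2) :
    ∫⁻ x in Set.Ioi (0:ℝ), ∫⁻ y in Set.Ioi (0:ℝ), ∫⁻ z in Set.Ioi (0:ℝ),
      ENNReal.ofReal ((x * y * z) ^ (-γ - 1) * (1 - Real.exp (-(x * y)))
        * (1 - Real.exp (-(x * z))) * (1 - Real.exp (-(y * z)))) < ⊤ := by
  nth_rw 1 [← Ioc_union_Ioi_eq_Ioi zero_le_one]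
  rw [lintegral_union measurableSet_Ioi (Ioc_disjoint_Ioi le_rfl)]
  refine ENNReal.add_lt_top.2 ⟨?_, ?_⟩
  · exact setLIntegral_aIntegrand_lt_top (s := (3 * γ - 2) / 4) measurableSet_Ioc
      Ioc_subset_Ioi_self (by linarith) (by linarith) (by linarith) (by linarith)
      (integrableOn_Ioc_rpow (by linarith)).lintegral_lt_top
  · exact setLIntegral_aIntegrand_lt_top (s := 1) measurableSet_Ioi
      (Ioi_subset_Ioi zero_le_one) zero_le_one le_rfl (by linarith) h1
      (integrableOn_Ioi_rpow_of_lt (by linarith) one_pos).lintegral_lt_top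
end

section
/- Let q : [0,∞) → [0,1] satisfy q(u) ≤ min(u,1) for all u ≥ 0. Then for every γ ∈ (1,2), the integral ∫₀^∞∫₀^∞∫₀^∞ (xyz)^{-γ-1}·q(xy)q(xz)q(yz) dx dy dz is finite. -/
open MeasureTheory Set

lemma lint_Ioc (p a : ℝ) (hp : -1 < p) (ha : 0 < a) :
    ∫⁻ z in Set.Ioc 0 a, ENNReal.ofReal (z ^ p) = ENNReal.ofReal (a ^ (p+1) / (p+1)) := by
  have hint : IntegrableOn (fun z : ℝ => z ^ p) (Set.Ioc 0 a) := by
    have := (intervalIntegral.intervalIntegrable_rpow' hp (a := 0) (b := a))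
    rwa [intervalIntegrable_iff, uIoc_of_le ha.le] at this
  rw [← MeasureTheory.ofReal_integral_eq_lintegral_ofReal hint
    ((ae_restrict_iff' measurableSet_Ioc).2 (Filter.Eventually.of_forall
      fun z hz => (Real.rpow_pos_of_pos hz.1 p).le))]
  congr 1
  rw [← intervalIntegral.integral_of_le ha.le, integral_rpow (Or.inl hp),
    Real.zero_rpow (by linarith), sub_zero]

lemma lint_Ioi (p a : ℝ) (hp : p < -1) (ha : 0 < a) :
    ∫⁻ z in Set.Ioi a, ENNReal.ofReal (z ^ p) = ENNReal.ofReal (-a ^ (p+1) / (p+1)) := by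
  rw [← MeasureTheory.ofReal_integral_eq_lintegral_ofReal (integrableOn_Ioi_rpow_of_lt hp ha)
    ((ae_restrict_iff' measurableSet_Ioi).2 (Filter.Eventually.of_forall
      fun z hz => (Real.rpow_pos_of_pos (ha.trans hz) p).le))]
  rw [integral_Ioi_rpow_of_lt hp ha]

lemma min_le_rpow {s e : ℝ} (hs : 0 < s) (he0 : 0 ≤ e) (he1 : e ≤ 1) :
    min s 1 ≤ s ^ e := by
  rcases le_total s 1 with h | h
  · calc min s 1 ≤ s := min_le_left _ _
    _ = s ^ (1:ℝ) := (Real.rpow_one s).symm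
    _ ≤ s ^ e := Real.rpow_le_rpow_of_exponent_ge hs h he1
  · calc min s 1 ≤ 1 := min_le_right _ _
    _ ≤ s ^ e := Real.one_le_rpow h he0

lemma Az (γ δ : ℝ) (h1 : 1 < γ) (h2 : γ < 2) (hδ1 : γ/2 < δ) (hδ2 : δ < 1)
    (x y : ℝ) (hx : 0 < x) (hy : 0 < y) (hxy : x ≤ y) :
    ∫⁻ z in Set.Ioi (0:ℝ),
        ENNReal.ofReal (z ^ (-γ-1) * min (x*z) 1 * min (y*z) 1)
      ≤ ENNReal.ofReal ((1/(2-γ) + 1/(γ-δ)) * (x ^ δ * y ^ (γ-δ))) := by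
  have hδ0 : 0 < δ := lt_trans (by linarith) hδ1
  have hγδ : δ < γ := by linarith
  have h2γ : (0:ℝ) < 2 - γ := by linarith
  have hyi : (0:ℝ) < y⁻¹ := inv_pos.2 hy
  have hkey : x * y ^ (γ-1) ≤ x ^ δ * y ^ (γ-δ) := by
    have e2 : x ^ (1-δ) ≤ y ^ (1-δ) := Real.rpow_le_rpow hx.le hxy (by linarith)
    have e3 : y ^ (1-δ) * y ^ (γ-1) = y ^ (γ-δ) := by
      rw [← Real.rpow_add hy]; ring_nf
    calc x * y ^ (γ-1) = x ^ δ * (x ^ (1-δ) * y ^ (γ-1)) := by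
          rw [show x ^ δ * (x ^ (1-δ) * y ^ (γ-1)) = (x ^ δ * x ^ (1-δ)) * y ^ (γ-1) by ring,
            ← Real.rpow_add hx]
          norm_num
      _ ≤ x ^ δ * (y ^ (1-δ) * y ^ (γ-1)) := by
          have := mul_le_mul_of_nonneg_right e2 (Real.rpow_nonneg hy.le (γ-1))
          have := mul_le_mul_of_nonneg_left this (Real.rpow_nonneg hx.le δ)
          linarith
      _ = x ^ δ * y ^ (γ-δ) := by rw [e3]
  have einv : (y⁻¹) ^ (1-γ+1) = y ^ (γ-2) := by
    rw [show (1-γ+1:ℝ) = -(γ-2) by ring, Real.inv_rpow hy.le, ← Real.rpow_neg hy.le, neg_neg]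
  have hsplit : Set.Ioc (0:ℝ) y⁻¹ ∪ Set.Ioi y⁻¹ = Set.Ioi (0:ℝ) :=
    Set.Ioc_union_Ioi_eq_Ioi hyi.le
  rw [← hsplit, lintegral_union measurableSet_Ioi (Set.Ioc_disjoint_Ioi le_rfl)]
  have hP1 : ∫⁻ z in Set.Ioc (0:ℝ) y⁻¹,
      ENNReal.ofReal (z ^ (-γ-1) * min (x*z) 1 * min (y*z) 1)
      ≤ ENNReal.ofReal (1/(2-γ) * (x ^ δ * y ^ (γ-δ))) := by
    have hb : ∀ z ∈ Set.Ioc (0:ℝ) y⁻¹,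
        ENNReal.ofReal (z ^ (-γ-1) * min (x*z) 1 * min (y*z) 1)
          ≤ ENNReal.ofReal ((x*y) * z ^ (1-γ)) := by
      intro z hz
      apply ENNReal.ofReal_le_ofReal
      have hz0 : 0 < z := hz.1
      have hzp : (0:ℝ) < z ^ (-γ-1) := Real.rpow_pos_of_pos hz0 _
      calc z ^ (-γ-1) * min (x*z) 1 * min (y*z) 1
          ≤ z ^ (-γ-1) * (x*z) * (y*z) := by
            apply mul_le_mul
            · exact mul_le_mul_of_nonneg_left (min_le_left _ _) hzp.le
            · exact min_le_left _ _
            · exact le_min (by positivity) zero_le_one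
            · positivity
        _ = (x*y) * (z ^ (-γ-1) * (z * z)) := by ring
        _ = (x*y) * z ^ (1-γ) := by
            have ezz : z * z = z ^ ((2:ℕ):ℝ) := by
              rw [Real.rpow_natCast]; ring
            have e2 : z ^ (-γ-1) * (z * z) = z ^ (1-γ) := by
              rw [ezz, ← Real.rpow_add hz0]
              congr 1
              push_cast; ring
            rw [e2]
    calc ∫⁻ z in Set.Ioc (0:ℝ) y⁻¹,
        ENNReal.ofReal (z ^ (-γ-1) * min (x*z) 1 * min (y*z) 1)
        ≤ ∫⁻ z in Set.Ioc (0:ℝ) y⁻¹, ENNReal.ofReal ((x*y) * z ^ (1-γ)) :=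
          setLIntegral_mono' measurableSet_Ioc hb
      _ = ENNReal.ofReal (x*y) * ∫⁻ z in Set.Ioc (0:ℝ) y⁻¹, ENNReal.ofReal (z ^ (1-γ)) := by
          rw [← lintegral_const_mul' _ _ ENNReal.ofReal_ne_top]
          congr 1; ext z; rw [← ENNReal.ofReal_mul (by positivity)]
      _ = ENNReal.ofReal (x*y) * ENNReal.ofReal ((y⁻¹) ^ (1-γ+1) / (1-γ+1)) := by
          rw [lint_Ioc _ _ (by linarith) hyi]
      _ ≤ ENNReal.ofReal (1/(2-γ) * (x ^ δ * y ^ (γ-δ))) := by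
          rw [← ENNReal.ofReal_mul (by positivity)]
          apply ENNReal.ofReal_le_ofReal
          rw [einv, show (1-γ+1:ℝ) = 2-γ by ring]
          have ey : y * y ^ (γ-2) = y ^ (γ-1) := by
            nth_rewrite 1 [← Real.rpow_one y]
            rw [← Real.rpow_add hy]; ring_nf
          calc x * y * (y ^ (γ-2) / (2-γ)) = (x * (y * y ^ (γ-2))) / (2-γ) := by ring
            _ = (x * y ^ (γ-1)) / (2-γ) := by rw [ey]
            _ ≤ (x ^ δ * y ^ (γ-δ)) / (2-γ) := by gcongr
            _ = 1/(2-γ) * (x ^ δ * y ^ (γ-δ)) := by ring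
  have hP2 : ∫⁻ z in Set.Ioi y⁻¹,
      ENNReal.ofReal (z ^ (-γ-1) * min (x*z) 1 * min (y*z) 1)
      ≤ ENNReal.ofReal (1/(γ-δ) * (x ^ δ * y ^ (γ-δ))) := by
    have hb : ∀ z ∈ Set.Ioi y⁻¹,
        ENNReal.ofReal (z ^ (-γ-1) * min (x*z) 1 * min (y*z) 1)
          ≤ ENNReal.ofReal (x ^ δ * z ^ (δ-γ-1)) := by
      intro z hz
      apply ENNReal.ofReal_le_ofReal
      have hz0 : 0 < z := hyi.trans hz
      have hzp : (0:ℝ) < z ^ (-γ-1) := Real.rpow_pos_of_pos hz0 _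
      have hyz : min (y*z) 1 ≤ 1 := min_le_right _ _
      have hxz : min (x*z) 1 ≤ (x*z) ^ δ := min_le_rpow (by positivity) hδ0.le hδ2.le
      calc z ^ (-γ-1) * min (x*z) 1 * min (y*z) 1
          ≤ (z ^ (-γ-1) * (x*z) ^ δ) * 1 := by
            apply mul_le_mul
            · exact mul_le_mul_of_nonneg_left hxz hzp.le
            · exact hyz
            · exact le_min (by positivity) zero_le_one
            · positivity
        _ = x ^ δ * (z ^ (-γ-1) * z ^ δ) := by
            rw [Real.mul_rpow hx.le hz0.le]; ring
        _ = x ^ δ * z ^ (δ-γ-1) := by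
            rw [← Real.rpow_add hz0]; ring_nf
    calc ∫⁻ z in Set.Ioi y⁻¹,
        ENNReal.ofReal (z ^ (-γ-1) * min (x*z) 1 * min (y*z) 1)
        ≤ ∫⁻ z in Set.Ioi y⁻¹, ENNReal.ofReal (x ^ δ * z ^ (δ-γ-1)) :=
          setLIntegral_mono' measurableSet_Ioi hb
      _ = ENNReal.ofReal (x ^ δ) * ∫⁻ z in Set.Ioi y⁻¹, ENNReal.ofReal (z ^ (δ-γ-1)) := by
          rw [← lintegral_const_mul' _ _ ENNReal.ofReal_ne_top]
          congr 1; ext z; rw [← ENNReal.ofReal_mul (by positivity)]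
      _ = ENNReal.ofReal (x ^ δ) * ENNReal.ofReal (-(y⁻¹) ^ (δ-γ-1+1) / (δ-γ-1+1)) := by
          rw [lint_Ioi _ _ (by linarith) hyi]
      _ = ENNReal.ofReal (1/(γ-δ) * (x ^ δ * y ^ (γ-δ))) := by
          have einv2 : (y⁻¹) ^ (δ-γ-1+1) = y ^ (γ-δ) := by
            rw [show (δ-γ-1+1:ℝ) = -(γ-δ) by ring, Real.inv_rpow hy.le,
              ← Real.rpow_neg hy.le, neg_neg]
          have ev : -(y⁻¹) ^ (δ-γ-1+1) / (δ-γ-1+1) = y ^ (γ-δ) / (γ-δ) := by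
            rw [einv2, show (δ-γ-1+1:ℝ) = -(γ-δ) by ring, div_neg, neg_div, neg_neg]
          rw [ev, ← ENNReal.ofReal_mul (by positivity)]
          congr 1
          ring
  calc _ ≤ ENNReal.ofReal (1/(2-γ) * (x ^ δ * y ^ (γ-δ)))
        + ENNReal.ofReal (1/(γ-δ) * (x ^ δ * y ^ (γ-δ))) := add_le_add hP1 hP2
    _ = ENNReal.ofReal ((1/(2-γ) + 1/(γ-δ)) * (x ^ δ * y ^ (γ-δ))) := by
        have hc1 : (0:ℝ) ≤ 1/(2-γ) * (x ^ δ * y ^ (γ-δ)) :=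
          mul_nonneg (by rw [one_div]; exact (inv_nonneg.2 h2γ.le)) (by positivity)
        have hc2 : (0:ℝ) ≤ 1/(γ-δ) * (x ^ δ * y ^ (γ-δ)) :=
          mul_nonneg (by rw [one_div]; exact (inv_nonneg.2 (by linarith))) (by positivity)
        rw [← ENNReal.ofReal_add hc1 hc2]
        congr 1
        ring

lemma Az' (γ δ : ℝ) (h1 : 1 < γ) (h2 : γ < 2) (hδ1 : γ/2 < δ) (hδ2 : δ < 1)
    (x y : ℝ) (hx : 0 < x) (hy : 0 < y) :
    ∫⁻ z in Set.Ioi (0:ℝ),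
        ENNReal.ofReal (z ^ (-γ-1) * min (x*z) 1 * min (y*z) 1)
      ≤ ENNReal.ofReal ((1/(2-γ) + 1/(γ-δ)) * (min x y ^ δ * max x y ^ (γ-δ))) := by
  rcases le_total x y with h | h
  · rw [min_eq_left h, max_eq_right h]
    exact Az γ δ h1 h2 hδ1 hδ2 x y hx hy h
  · rw [min_eq_right h, max_eq_left h]
    calc ∫⁻ z in Set.Ioi (0:ℝ),
          ENNReal.ofReal (z ^ (-γ-1) * min (x*z) 1 * min (y*z) 1)
        = ∫⁻ z in Set.Ioi (0:ℝ),
          ENNReal.ofReal (z ^ (-γ-1) * min (y*z) 1 * min (x*z) 1) := by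
          apply lintegral_congr
          intro z
          rw [mul_right_comm]
      _ ≤ _ := Az γ δ h1 h2 hδ1 hδ2 y x hy hx h

lemma By (γ δ ε C : ℝ) (h1 : 1 < γ) (h2 : γ < 2) (hδ1 : γ/2 < δ) (hδ2 : δ < 1)
    (hε1 : γ - δ < ε) (hε2 : ε < δ) (hε0 : 0 ≤ ε) (hε3 : ε ≤ 1) (hC : 0 ≤ C)
    (x : ℝ) (hx : 0 < x) :
    ∫⁻ y in Set.Ioi (0:ℝ),
        ENNReal.ofReal ((x ^ (-γ-1) * y ^ (-γ-1) * min (x*y) 1)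
          * (C * (min x y ^ δ * max x y ^ (γ-δ))))
      ≤ ENNReal.ofReal (C * (1/(ε+δ-γ) + 1/(δ-ε)) * x ^ (2*ε-γ-1)) := by
  have hεδγ : (0:ℝ) < ε + δ - γ := by linarith
  have hδε : (0:ℝ) < δ - ε := by linarith
  have hsplit : Set.Ioc (0:ℝ) x ∪ Set.Ioi x = Set.Ioi (0:ℝ) :=
    Set.Ioc_union_Ioi_eq_Ioi hx.le
  rw [← hsplit, lintegral_union measurableSet_Ioi (Set.Ioc_disjoint_Ioi le_rfl)]
  have hP1 : ∫⁻ y in Set.Ioc (0:ℝ) x,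
      ENNReal.ofReal ((x ^ (-γ-1) * y ^ (-γ-1) * min (x*y) 1)
        * (C * (min x y ^ δ * max x y ^ (γ-δ))))
      ≤ ENNReal.ofReal (C / (ε+δ-γ) * x ^ (2*ε-γ-1)) := by
    have hb : ∀ y ∈ Set.Ioc (0:ℝ) x,
        ENNReal.ofReal ((x ^ (-γ-1) * y ^ (-γ-1) * min (x*y) 1)
          * (C * (min x y ^ δ * max x y ^ (γ-δ))))
          ≤ ENNReal.ofReal ((C * x ^ (ε-δ-1)) * y ^ (ε+δ-γ-1)) := by
      intro y hy
      have hy0 : 0 < y := hy.1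
      apply ENNReal.ofReal_le_ofReal
      rw [min_eq_right hy.2, max_eq_left hy.2]
      have hmin : min (x*y) 1 ≤ x ^ ε * y ^ ε := by
        rw [← Real.mul_rpow hx.le hy0.le]
        exact min_le_rpow (by positivity) hε0 hε3
      have ex : x ^ (-γ-1) * x ^ ε * x ^ (γ-δ) = x ^ (ε-δ-1) := by
        rw [← Real.rpow_add hx, ← Real.rpow_add hx]; congr 1; ring
      have ey : y ^ (-γ-1) * y ^ ε * y ^ δ = y ^ (ε+δ-γ-1) := by
        rw [← Real.rpow_add hy0, ← Real.rpow_add hy0]; congr 1; ring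
      calc (x ^ (-γ-1) * y ^ (-γ-1) * min (x*y) 1) * (C * (y ^ δ * x ^ (γ-δ)))
          ≤ (x ^ (-γ-1) * y ^ (-γ-1) * (x ^ ε * y ^ ε)) * (C * (y ^ δ * x ^ (γ-δ))) := by
            apply mul_le_mul_of_nonneg_right _ (by positivity)
            apply mul_le_mul_of_nonneg_left hmin (by positivity)
        _ = ((x ^ (-γ-1) * x ^ ε * x ^ (γ-δ)) * (y ^ (-γ-1) * y ^ ε * y ^ δ)) * C := by
            ring
        _ = ((C * x ^ (ε-δ-1)) * y ^ (ε+δ-γ-1)) := by rw [ex, ey]; ring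
    calc ∫⁻ y in Set.Ioc (0:ℝ) x,
        ENNReal.ofReal ((x ^ (-γ-1) * y ^ (-γ-1) * min (x*y) 1)
          * (C * (min x y ^ δ * max x y ^ (γ-δ))))
        ≤ ∫⁻ y in Set.Ioc (0:ℝ) x,
          ENNReal.ofReal ((C * x ^ (ε-δ-1)) * y ^ (ε+δ-γ-1)) :=
          setLIntegral_mono' measurableSet_Ioc hb
      _ = ENNReal.ofReal (C * x ^ (ε-δ-1))
            * ∫⁻ y in Set.Ioc (0:ℝ) x, ENNReal.ofReal (y ^ (ε+δ-γ-1)) := by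
          rw [← lintegral_const_mul' _ _ ENNReal.ofReal_ne_top]
          congr 1; ext y; rw [← ENNReal.ofReal_mul (by positivity)]
      _ = ENNReal.ofReal (C * x ^ (ε-δ-1))
            * ENNReal.ofReal (x ^ (ε+δ-γ-1+1) / (ε+δ-γ-1+1)) := by
          rw [lint_Ioc _ _ (by linarith) hx]
      _ = ENNReal.ofReal (C / (ε+δ-γ) * x ^ (2*ε-γ-1)) := by
          rw [← ENNReal.ofReal_mul (by positivity)]
          congr 1
          have exx : x ^ (ε-δ-1) * x ^ (ε+δ-γ-1+1) = x ^ (2*ε-γ-1) := by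
            rw [← Real.rpow_add hx]; congr 1; ring
          calc C * x ^ (ε-δ-1) * (x ^ (ε+δ-γ-1+1) / (ε+δ-γ-1+1))
              = C / (ε+δ-γ-1+1) * (x ^ (ε-δ-1) * x ^ (ε+δ-γ-1+1)) := by ring
            _ = C / (ε+δ-γ) * x ^ (2*ε-γ-1) := by
                rw [exx]; congr 2; ring
  have hP2 : ∫⁻ y in Set.Ioi x,
      ENNReal.ofReal ((x ^ (-γ-1) * y ^ (-γ-1) * min (x*y) 1)
        * (C * (min x y ^ δ * max x y ^ (γ-δ))))
      ≤ ENNReal.ofReal (C / (δ-ε) * x ^ (2*ε-γ-1)) := by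
    have hb : ∀ y ∈ Set.Ioi x,
        ENNReal.ofReal ((x ^ (-γ-1) * y ^ (-γ-1) * min (x*y) 1)
          * (C * (min x y ^ δ * max x y ^ (γ-δ))))
          ≤ ENNReal.ofReal ((C * x ^ (ε+δ-γ-1)) * y ^ (ε-δ-1)) := by
      intro y hy
      have hy0 : 0 < y := hx.trans hy
      have hxy : x ≤ y := (le_of_lt hy)
      apply ENNReal.ofReal_le_ofReal
      rw [min_eq_left hxy, max_eq_right hxy]
      have hmin : min (x*y) 1 ≤ x ^ ε * y ^ ε := by
        rw [← Real.mul_rpow hx.le hy0.le]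
        exact min_le_rpow (by positivity) hε0 hε3
      have ex : x ^ (-γ-1) * x ^ ε * x ^ δ = x ^ (ε+δ-γ-1) := by
        rw [← Real.rpow_add hx, ← Real.rpow_add hx]; congr 1; ring
      have ey : y ^ (-γ-1) * y ^ ε * y ^ (γ-δ) = y ^ (ε-δ-1) := by
        rw [← Real.rpow_add hy0, ← Real.rpow_add hy0]; congr 1; ring
      calc (x ^ (-γ-1) * y ^ (-γ-1) * min (x*y) 1) * (C * (x ^ δ * y ^ (γ-δ)))
          ≤ (x ^ (-γ-1) * y ^ (-γ-1) * (x ^ ε * y ^ ε)) * (C * (x ^ δ * y ^ (γ-δ))) := by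
            apply mul_le_mul_of_nonneg_right _ (by positivity)
            apply mul_le_mul_of_nonneg_left hmin (by positivity)
        _ = ((x ^ (-γ-1) * x ^ ε * x ^ δ) * (y ^ (-γ-1) * y ^ ε * y ^ (γ-δ))) * C := by
            ring
        _ = ((C * x ^ (ε+δ-γ-1)) * y ^ (ε-δ-1)) := by rw [ex, ey]; ring
    calc ∫⁻ y in Set.Ioi x,
        ENNReal.ofReal ((x ^ (-γ-1) * y ^ (-γ-1) * min (x*y) 1)
          * (C * (min x y ^ δ * max x y ^ (γ-δ))))
        ≤ ∫⁻ y in Set.Ioi x,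
          ENNReal.ofReal ((C * x ^ (ε+δ-γ-1)) * y ^ (ε-δ-1)) :=
          setLIntegral_mono' measurableSet_Ioi hb
      _ = ENNReal.ofReal (C * x ^ (ε+δ-γ-1))
            * ∫⁻ y in Set.Ioi x, ENNReal.ofReal (y ^ (ε-δ-1)) := by
          rw [← lintegral_const_mul' _ _ ENNReal.ofReal_ne_top]
          congr 1; ext y; rw [← ENNReal.ofReal_mul (by positivity)]
      _ = ENNReal.ofReal (C * x ^ (ε+δ-γ-1))
            * ENNReal.ofReal (-x ^ (ε-δ-1+1) / (ε-δ-1+1)) := by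
          rw [lint_Ioi _ _ (by linarith) hx]
      _ = ENNReal.ofReal (C / (δ-ε) * x ^ (2*ε-γ-1)) := by
          have ev : -x ^ (ε-δ-1+1) / (ε-δ-1+1) = x ^ (ε-δ) / (δ-ε) := by
            rw [show (ε-δ-1+1:ℝ) = ε-δ by ring]
            rw [show (ε-δ:ℝ) = -(δ-ε) by ring]
            rw [div_neg, neg_div, neg_neg]
          rw [ev, ← ENNReal.ofReal_mul (by positivity)]
          congr 1
          have exx : x ^ (ε+δ-γ-1) * x ^ (ε-δ) = x ^ (2*ε-γ-1) := by
            rw [← Real.rpow_add hx]; congr 1; ring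
          calc C * x ^ (ε+δ-γ-1) * (x ^ (ε-δ) / (δ-ε))
              = C / (δ-ε) * (x ^ (ε+δ-γ-1) * x ^ (ε-δ)) := by ring
            _ = C / (δ-ε) * x ^ (2*ε-γ-1) := by rw [exx]
  calc _ ≤ ENNReal.ofReal (C / (ε+δ-γ) * x ^ (2*ε-γ-1))
        + ENNReal.ofReal (C / (δ-ε) * x ^ (2*ε-γ-1)) := add_le_add hP1 hP2
    _ = ENNReal.ofReal (C * (1/(ε+δ-γ) + 1/(δ-ε)) * x ^ (2*ε-γ-1)) := by
        have hc1 : (0:ℝ) ≤ C / (ε+δ-γ) * x ^ (2*ε-γ-1) :=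
          mul_nonneg (div_nonneg hC hεδγ.le) (by positivity)
        have hc2 : (0:ℝ) ≤ C / (δ-ε) * x ^ (2*ε-γ-1) :=
          mul_nonneg (div_nonneg hC hδε.le) (by positivity)
        rw [← ENNReal.ofReal_add hc1 hc2]
        congr 1
        field_simp

lemma Dxy (γ δ ε : ℝ) (h1 : 1 < γ) (h2 : γ < 2) (hδ1 : γ/2 < δ) (hδ2 : δ < 1)
    (hε1 : γ - δ < ε) (hε2 : ε < δ) (hε0 : 0 ≤ ε) (hε3 : ε ≤ 1)
    (q : ℝ → ℝ) (hq0 : ∀ u ≥ (0:ℝ), 0 ≤ q u) (hqdom : ∀ u ≥ (0:ℝ), q u ≤ min u 1)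
    (x : ℝ) (hx : 0 < x) :
    ∫⁻ y in Set.Ioi (0:ℝ), ∫⁻ z in Set.Ioi (0:ℝ),
        ENNReal.ofReal ((x * y * z) ^ (-γ - 1) * q (x * y) * q (x * z) * q (y * z))
      ≤ ENNReal.ofReal ((1/(2-γ) + 1/(γ-δ)) * (1/(ε+δ-γ) + 1/(δ-ε)) * x ^ (2*ε-γ-1)) := by
  have h2γ : (0:ℝ) < 2 - γ := by linarith
  have hγδ : (0:ℝ) < γ - δ := by linarith
  have hC : (0:ℝ) ≤ 1/(2-γ) + 1/(γ-δ) :=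
    le_of_lt (add_pos (one_div_pos.2 h2γ) (one_div_pos.2 hγδ))
  refine le_trans (setLIntegral_mono' measurableSet_Ioi ?_)
    (By γ δ ε _ h1 h2 hδ1 hδ2 hε1 hε2 hε0 hε3 hC x hx)
  intro y hy
  have hy0 : (0:ℝ) < y := hy
  have hG1 : (0:ℝ) ≤ x ^ (-γ-1) * y ^ (-γ-1) * min (x*y) 1 := by
    have : (0:ℝ) ≤ min (x*y) 1 := le_min (by positivity) zero_le_one
    positivity
  calc ∫⁻ z in Set.Ioi (0:ℝ),
      ENNReal.ofReal ((x * y * z) ^ (-γ - 1) * q (x * y) * q (x * z) * q (y * z))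
      ≤ ∫⁻ z in Set.Ioi (0:ℝ),
        ENNReal.ofReal ((x ^ (-γ-1) * y ^ (-γ-1) * min (x*y) 1)
          * (z ^ (-γ-1) * min (x*z) 1 * min (y*z) 1)) := by
        apply setLIntegral_mono' measurableSet_Ioi
        intro z hz
        have hz0 : (0:ℝ) < z := hz
        apply ENNReal.ofReal_le_ofReal
        have hm : (x*y*z) ^ (-γ-1) = x ^ (-γ-1) * y ^ (-γ-1) * z ^ (-γ-1) := by
          rw [Real.mul_rpow (by positivity) hz0.le, Real.mul_rpow hx.le hy0.le]
        have hP : (0:ℝ) < x ^ (-γ-1) * y ^ (-γ-1) * z ^ (-γ-1) := by positivity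
        have n1 : 0 ≤ q (x*y) := hq0 _ (by positivity)
        have n2 : 0 ≤ q (x*z) := hq0 _ (by positivity)
        have n3 : 0 ≤ q (y*z) := hq0 _ (by positivity)
        have b1 : q (x*y) ≤ min (x*y) 1 := hqdom _ (by positivity)
        have b2 : q (x*z) ≤ min (x*z) 1 := hqdom _ (by positivity)
        have b3 : q (y*z) ≤ min (y*z) 1 := hqdom _ (by positivity)
        have mn1 : (0:ℝ) ≤ min (x*y) 1 := le_min (by positivity) zero_le_one
        have mn2 : (0:ℝ) ≤ min (x*z) 1 := le_min (by positivity) zero_le_one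
        have mn3 : (0:ℝ) ≤ min (y*z) 1 := le_min (by positivity) zero_le_one
        calc (x*y*z) ^ (-γ-1) * q (x*y) * q (x*z) * q (y*z)
            = x ^ (-γ-1) * y ^ (-γ-1) * z ^ (-γ-1) * q (x*y) * q (x*z) * q (y*z) := by
              rw [show (-γ - 1 : ℝ) = -γ-1 from rfl, hm]
          _ ≤ x ^ (-γ-1) * y ^ (-γ-1) * z ^ (-γ-1)
              * min (x*y) 1 * min (x*z) 1 * min (y*z) 1 := by
              have s1 : x ^ (-γ-1) * y ^ (-γ-1) * z ^ (-γ-1) * q (x*y)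
                  ≤ x ^ (-γ-1) * y ^ (-γ-1) * z ^ (-γ-1) * min (x*y) 1 :=
                mul_le_mul_of_nonneg_left b1 hP.le
              have s2 := mul_le_mul s1 b2 n2 (mul_nonneg hP.le mn1)
              exact mul_le_mul s2 b3 n3 (mul_nonneg (mul_nonneg hP.le mn1) mn2)
          _ = (x ^ (-γ-1) * y ^ (-γ-1) * min (x*y) 1)
              * (z ^ (-γ-1) * min (x*z) 1 * min (y*z) 1) := by ring
    _ = ENNReal.ofReal (x ^ (-γ-1) * y ^ (-γ-1) * min (x*y) 1)
        * ∫⁻ z in Set.Ioi (0:ℝ),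
          ENNReal.ofReal (z ^ (-γ-1) * min (x*z) 1 * min (y*z) 1) := by
        rw [← lintegral_const_mul' _ _ ENNReal.ofReal_ne_top]
        congr 1; ext z; rw [← ENNReal.ofReal_mul hG1]
    _ ≤ ENNReal.ofReal (x ^ (-γ-1) * y ^ (-γ-1) * min (x*y) 1)
        * ENNReal.ofReal ((1/(2-γ) + 1/(γ-δ)) * (min x y ^ δ * max x y ^ (γ-δ))) :=
        mul_le_mul_right (Az' γ δ h1 h2 hδ1 hδ2 x y hx hy0) _
    _ = ENNReal.ofReal ((x ^ (-γ-1) * y ^ (-γ-1) * min (x*y) 1)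
        * ((1/(2-γ) + 1/(γ-δ)) * (min x y ^ δ * max x y ^ (γ-δ)))) := by
        rw [← ENNReal.ofReal_mul hG1]

theorem stmt5 (γ : ℝ) (h1 : 1 < γ) (h2 : γ < 2)
    (q : ℝ → ℝ) (hqmeas : Measurable q)
    (hq0 : ∀ u ≥ (0:ℝ), 0 ≤ q u) (hq1 : ∀ u ≥ (0:ℝ), q u ≤ 1)
    (hqdom : ∀ u ≥ (0:ℝ), q u ≤ min u 1) :
    ∫⁻ x in Set.Ioi (0:ℝ), ∫⁻ y in Set.Ioi (0:ℝ), ∫⁻ z in Set.Ioi (0:ℝ),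
      ENNReal.ofReal ((x * y * z) ^ (-γ - 1) * q (x * y) * q (x * z) * q (y * z)) < ⊤ := by
  set δ : ℝ := (γ+2)/4 with hδ
  set ε₁ : ℝ := (3*γ+2)/8 with hε₁
  set ε₂ : ℝ := (5*γ-2)/8 with hε₂
  have hδ1 : γ/2 < δ := by rw [hδ]; linarith
  have hδ2 : δ < 1 := by rw [hδ]; linarith
  have hCpos : (0:ℝ) ≤ 1/(2-γ) + 1/(γ-δ) := by
    have a1 : (0:ℝ) < 1/(2-γ) := one_div_pos.2 (by linarith)
    have a2 : (0:ℝ) < 1/(γ-δ) := one_div_pos.2 (by rw [hδ]; linarith)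
    linarith
  have hsplit : Set.Ioc (0:ℝ) 1 ∪ Set.Ioi 1 = Set.Ioi (0:ℝ) :=
    Set.Ioc_union_Ioi_eq_Ioi zero_le_one
  have egoal : ∫⁻ x in Set.Ioi (0:ℝ), ∫⁻ y in Set.Ioi (0:ℝ), ∫⁻ z in Set.Ioi (0:ℝ),
      ENNReal.ofReal ((x * y * z) ^ (-γ - 1) * q (x * y) * q (x * z) * q (y * z))
      = ∫⁻ x in Set.Ioc (0:ℝ) 1 ∪ Set.Ioi 1, ∫⁻ y in Set.Ioi (0:ℝ), ∫⁻ z in Set.Ioi (0:ℝ),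
      ENNReal.ofReal ((x * y * z) ^ (-γ - 1) * q (x * y) * q (x * z) * q (y * z)) := by
    rw [hsplit]
  rw [egoal]
  have hpart1 : ∫⁻ x in Set.Ioc (0:ℝ) 1, ∫⁻ y in Set.Ioi (0:ℝ), ∫⁻ z in Set.Ioi (0:ℝ),
      ENNReal.ofReal ((x * y * z) ^ (-γ - 1) * q (x * y) * q (x * z) * q (y * z)) < ⊤ := by
    have hK : (0:ℝ) ≤ (1/(2-γ) + 1/(γ-δ)) * (1/(ε₁+δ-γ) + 1/(δ-ε₁)) := by
      have a1 : (0:ℝ) < 1/(ε₁+δ-γ) := one_div_pos.2 (by rw [hδ, hε₁]; linarith)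
      have a2 : (0:ℝ) < 1/(δ-ε₁) := one_div_pos.2 (by rw [hδ, hε₁]; linarith)
      exact mul_nonneg hCpos (by linarith)
    have hmono : ∀ x ∈ Set.Ioc (0:ℝ) 1,
        (∫⁻ y in Set.Ioi (0:ℝ), ∫⁻ z in Set.Ioi (0:ℝ),
          ENNReal.ofReal ((x * y * z) ^ (-γ - 1) * q (x * y) * q (x * z) * q (y * z)))
        ≤ ENNReal.ofReal ((1/(2-γ) + 1/(γ-δ)) * (1/(ε₁+δ-γ) + 1/(δ-ε₁)) * x ^ (2*ε₁-γ-1)) :=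
      fun x hx => Dxy γ δ ε₁ h1 h2 hδ1 hδ2 (by rw [hδ, hε₁]; linarith)
        (by rw [hδ, hε₁]; linarith) (by rw [hε₁]; linarith) (by rw [hε₁]; linarith)
        q hq0 hqdom x hx.1
    calc ∫⁻ x in Set.Ioc (0:ℝ) 1, ∫⁻ y in Set.Ioi (0:ℝ), ∫⁻ z in Set.Ioi (0:ℝ),
        ENNReal.ofReal ((x * y * z) ^ (-γ - 1) * q (x * y) * q (x * z) * q (y * z))
        ≤ ∫⁻ x in Set.Ioc (0:ℝ) 1, ENNReal.ofReal
            ((1/(2-γ) + 1/(γ-δ)) * (1/(ε₁+δ-γ) + 1/(δ-ε₁)) * x ^ (2*ε₁-γ-1)) :=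
          setLIntegral_mono' measurableSet_Ioc hmono
      _ = ENNReal.ofReal ((1/(2-γ) + 1/(γ-δ)) * (1/(ε₁+δ-γ) + 1/(δ-ε₁)))
            * ∫⁻ x in Set.Ioc (0:ℝ) 1, ENNReal.ofReal (x ^ (2*ε₁-γ-1)) := by
          rw [← lintegral_const_mul' _ _ ENNReal.ofReal_ne_top]
          congr 1; ext x
          exact ENNReal.ofReal_mul hK
      _ < ⊤ := by
          rw [lint_Ioc _ _ (by rw [hε₁]; linarith) zero_lt_one]
          exact ENNReal.mul_lt_top ENNReal.ofReal_lt_top ENNReal.ofReal_lt_top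
  have hpart2 : ∫⁻ x in Set.Ioi (1:ℝ), ∫⁻ y in Set.Ioi (0:ℝ), ∫⁻ z in Set.Ioi (0:ℝ),
      ENNReal.ofReal ((x * y * z) ^ (-γ - 1) * q (x * y) * q (x * z) * q (y * z)) < ⊤ := by
    have hK : (0:ℝ) ≤ (1/(2-γ) + 1/(γ-δ)) * (1/(ε₂+δ-γ) + 1/(δ-ε₂)) := by
      have a1 : (0:ℝ) < 1/(ε₂+δ-γ) := one_div_pos.2 (by rw [hδ, hε₂]; linarith)
      have a2 : (0:ℝ) < 1/(δ-ε₂) := one_div_pos.2 (by rw [hδ, hε₂]; linarith)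
      exact mul_nonneg hCpos (by linarith)
    have hmono : ∀ x ∈ Set.Ioi (1:ℝ),
        (∫⁻ y in Set.Ioi (0:ℝ), ∫⁻ z in Set.Ioi (0:ℝ),
          ENNReal.ofReal ((x * y * z) ^ (-γ - 1) * q (x * y) * q (x * z) * q (y * z)))
        ≤ ENNReal.ofReal ((1/(2-γ) + 1/(γ-δ)) * (1/(ε₂+δ-γ) + 1/(δ-ε₂)) * x ^ (2*ε₂-γ-1)) :=
      fun x hx => Dxy γ δ ε₂ h1 h2 hδ1 hδ2 (by rw [hδ, hε₂]; linarith)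
        (by rw [hδ, hε₂]; linarith) (by rw [hε₂]; linarith) (by rw [hε₂]; linarith)
        q hq0 hqdom x (lt_trans zero_lt_one hx)
    calc ∫⁻ x in Set.Ioi (1:ℝ), ∫⁻ y in Set.Ioi (0:ℝ), ∫⁻ z in Set.Ioi (0:ℝ),
        ENNReal.ofReal ((x * y * z) ^ (-γ - 1) * q (x * y) * q (x * z) * q (y * z))
        ≤ ∫⁻ x in Set.Ioi (1:ℝ), ENNReal.ofReal
            ((1/(2-γ) + 1/(γ-δ)) * (1/(ε₂+δ-γ) + 1/(δ-ε₂)) * x ^ (2*ε₂-γ-1)) :=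
          setLIntegral_mono' measurableSet_Ioi hmono
      _ = ENNReal.ofReal ((1/(2-γ) + 1/(γ-δ)) * (1/(ε₂+δ-γ) + 1/(δ-ε₂)))
            * ∫⁻ x in Set.Ioi (1:ℝ), ENNReal.ofReal (x ^ (2*ε₂-γ-1)) := by
          rw [← lintegral_const_mul' _ _ ENNReal.ofReal_ne_top]
          congr 1; ext x
          exact ENNReal.ofReal_mul hK
      _ < ⊤ := by
          rw [lint_Ioi _ _ (by rw [hε₂]; linarith) zero_lt_one]
          exact ENNReal.mul_lt_top ENNReal.ofReal_lt_top ENNReal.ofReal_lt_top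
  exact lt_of_le_of_lt (lintegral_union_le _ _ _) (ENNReal.add_lt_top.2 ⟨hpart1, hpart2⟩)
end

section
/- Let D₁, D₂ be independent non-negative regularly-varying random variables with exponent γ ∈ (1,2) and finite mean. Let φ(x) = x - 1 + e^{-x}. Then for every δ > 0, lim_{t→∞} E[φ(D₁D₂/t)] / t^{-γ+δ} = 0. -/
open MeasureTheory Filter Set Topology

/-! For `1 ≤ β ≤ 2` we have `φ(x) = x - 1 + e^{-x} ≤ x ^ β` on `[0, ∞)`, hence
`E φ(D₁D₂/t) ≤ t^{-β} E (D₁D₂)^β`. A tail `L t * t^{-γ}` with `L` slowly varying satisfies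
`F (2t) / F t → 2^{-γ}`, so iterating along doublings it is eventually `O(u^{-p})` for every
`p < γ` (a Potter-type bound); therefore `D₁, D₂` have finite `β`-th moments for all `β < γ`, and
by independence so does `D₁D₂`. Taking `β ∈ (max 1 (γ - δ), γ)` gives
`E φ(D₁D₂/t) / t^{-γ+δ} = O(t^{γ-δ-β}) → 0`. -/

lemma sub_one_add_exp_neg_nonneg (x : ℝ) : 0 ≤ x - 1 + Real.exp (-x) := by
  linarith [Real.add_one_le_exp (-x)]

lemma sub_one_add_exp_neg_le_rpow {x β : ℝ} (hx : 0 ≤ x) (hβ1 : 1 ≤ β) (hβ2 : β ≤ 2) :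
    x - 1 + Real.exp (-x) ≤ x ^ β := by
  rcases le_or_gt x 1 with hx1 | hx1
  · rcases hx.eq_or_lt with rfl | hx0
    · simp [Real.zero_rpow (by linarith : β ≠ 0)]
    have hsq : Real.exp (-x) - 1 - -x ≤ (-x) ^ 2 :=
      (abs_le.mp (Real.abs_exp_sub_one_sub_id_le (by rwa [abs_neg, abs_of_nonneg hx]))).2
    calc x - 1 + Real.exp (-x) ≤ x ^ (2 : ℝ) := by rw [Real.rpow_two]; linarith [neg_sq x]
      _ ≤ x ^ β := Real.rpow_le_rpow_of_exponent_ge hx0 hx1 hβ2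
  · calc x - 1 + Real.exp (-x) ≤ x ^ (1 : ℝ) := by
          rw [Real.rpow_one]; linarith [Real.exp_le_one_iff.mpr (by linarith : -x ≤ 0)]
      _ ≤ x ^ β := Real.rpow_le_rpow_of_exponent_le hx1.le hβ1

lemma le_mul_rpow_of_le_two_rpow_mul {g : ℝ → ℝ} {s C T : ℝ} (hT : 0 < T)
    (hdouble : ∀ t ≥ T, g (2 * t) ≤ 2 ^ s * g t)
    (hbase : ∀ u ∈ Icc T (2 * T), g u ≤ C * u ^ s) :
    ∀ u ≥ T, g u ≤ C * u ^ s := by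
  suffices h : ∀ n : ℕ, ∀ u ∈ Icc T (2 ^ n * T), g u ≤ C * u ^ s by
    intro u hu
    obtain ⟨n, hn⟩ := pow_unbounded_of_one_lt (u / T) one_lt_two
    exact h n u ⟨hu, ((div_lt_iff₀ hT).mp hn).le⟩
  intro n
  induction n with
  | zero => exact fun u hu => hbase u ⟨hu.1, by linarith [hu.2]⟩
  | succ n ih =>
    rintro u ⟨hTu, hu⟩
    rcases le_or_gt u (2 * T) with hu2 | hu2
    · exact hbase u ⟨hTu, hu2⟩
    have hhalf : u / 2 ∈ Icc T (2 ^ n * T) :=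
      ⟨by linarith, by rw [pow_succ] at hu; linarith⟩
    have hu0 : 0 ≤ u / 2 := by linarith
    calc g u = g (2 * (u / 2)) := by ring_nf
      _ ≤ 2 ^ s * g (u / 2) := hdouble _ hhalf.1
      _ ≤ 2 ^ s * (C * (u / 2) ^ s) := by gcongr; exact ih _ hhalf
      _ = C * (2 * (u / 2)) ^ s := by rw [Real.mul_rpow zero_le_two hu0]; ring
      _ = C * u ^ s := by ring_nf

lemma exists_le_mul_rpow_neg_of_eq_mul_rpow_neg {F L : ℝ → ℝ} {γ p : ℝ} (hp : 0 ≤ p)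
    (hpγ : p < γ) (hF_nn : ∀ t, 0 ≤ F t) (hF_anti : AntitoneOn F (Ioi 0))
    (hFL : ∀ t > 0, F t = L t * t ^ (-γ))
    (hL : Tendsto (fun t => L (2 * t) / L t) atTop (𝓝 1)) :
    ∃ C T, 0 < T ∧ ∀ u ≥ T, F u ≤ C * u ^ (-p) := by
  have hratio : Tendsto (fun t => F (2 * t) / F t) atTop (𝓝 (2 ^ (-γ))) := by
    refine (one_mul ((2 : ℝ) ^ (-γ)) ▸ hL.mul_const _).congr' ?_
    filter_upwards [eventually_gt_atTop 0] with t ht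
    have ht' : t ^ (-γ) ≠ 0 := (Real.rpow_pos_of_pos ht _).ne'
    rw [hFL t ht, hFL (2 * t) (by positivity), Real.mul_rpow zero_le_two ht.le]
    field_simp
  have hlt : (2 : ℝ) ^ (-γ) < 2 ^ (-p) := Real.rpow_lt_rpow_of_exponent_lt one_lt_two (by linarith)
  obtain ⟨T₀, hT₀⟩ := (eventually_atTop.mp
    (hratio.eventually (Ioo_mem_nhds (by positivity : (0 : ℝ) < 2 ^ (-γ)) hlt)))
  set T := max T₀ 1
  have hT : 0 < T := lt_max_of_lt_right one_pos
  have hdouble : ∀ t ≥ T, F (2 * t) ≤ 2 ^ (-p) * F t := by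
    intro t ht
    obtain ⟨hpos, hlt⟩ := hT₀ t (le_of_max_le_left ht)
    have hFt : 0 < F t := (hF_nn t).lt_of_ne fun h => by simp [← h] at hpos
    exact ((div_lt_iff₀ hFt).mp hlt).le
  refine ⟨F T * (2 * T) ^ p, T, hT, le_mul_rpow_of_le_two_rpow_mul hT hdouble ?_⟩
  rintro u ⟨hTu, hu⟩
  have h2T : (2 * T) ^ p * (2 * T) ^ (-p) = 1 := by
    rw [← Real.rpow_add (by positivity), add_neg_cancel, Real.rpow_zero]
  calc F u ≤ F T := hF_anti hT (hT.trans_le hTu) hTu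
    _ = F T * (2 * T) ^ p * (2 * T) ^ (-p) := by rw [mul_assoc, h2T, mul_one]
    _ ≤ F T * (2 * T) ^ p * u ^ (-p) :=
      mul_le_mul_of_nonneg_left (Real.rpow_le_rpow_of_nonpos (hT.trans_le hTu) hu (by linarith))
        (mul_nonneg (hF_nn T) (by positivity))
lemma integrable_rpow_of_tail_le_mul_rpow_neg {Ω : Type*} [MeasurableSpace Ω] {μ : Measure Ω}
    [IsFiniteMeasure μ] {f : Ω → ℝ} (hf : Measurable f) (hf_nn : ∀ ω, 0 ≤ f ω)
    {β p C T : ℝ} (hβ : 0 < β) (hβp : β < p) (hT : 0 < T)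
    (htail : ∀ t ≥ T, μ.real {ω | t < f ω} ≤ C * t ^ (-p)) :
    Integrable (fun ω => f ω ^ β) μ := by
  refine ⟨(hf.pow_const β).aestronglyMeasurable, ?_⟩
  simp_rw [hasFiniteIntegral_iff_ofReal (ae_of_all _ fun ω => Real.rpow_nonneg (hf_nn ω) β),
    lintegral_rpow_eq_lintegral_meas_lt_mul μ (ae_of_all _ hf_nn) hf.aemeasurable hβ,
    ← Ioc_union_Ioi_eq_Ioi hT.le, lintegral_union measurableSet_Ioi Ioc_disjoint_Ioi_same]
  refine ENNReal.mul_lt_top ENNReal.ofReal_lt_top (ENNReal.add_lt_top.mpr ⟨?_, ?_⟩)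
  · have hint : IntegrableOn (fun t : ℝ => μ.real univ * t ^ (β - 1)) (Ioc 0 T) :=
      (intervalIntegral.intervalIntegrable_rpow' (by linarith)).1.const_mul _
    refine lt_of_le_of_lt (setLIntegral_mono (by fun_prop) fun t _ => ?_)
      hint.setLIntegral_lt_top
    rw [ENNReal.ofReal_mul measureReal_nonneg, ofReal_measureReal]
    gcongr
    exact subset_univ _
  · have hint : IntegrableOn (fun t : ℝ => C * t ^ (β - 1 - p)) (Ioi T) :=
      (integrableOn_Ioi_rpow_of_lt (by linarith) hT).const_mul C
    refine lt_of_le_of_lt (setLIntegral_mono (by fun_prop) fun t ht => ?_)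
      hint.setLIntegral_lt_top
    have ht0 : 0 < t := hT.trans ht
    have hsplit : t ^ (β - 1 - p) = t ^ (-p) * t ^ (β - 1) := by
      rw [← Real.rpow_add ht0]; ring_nf
    rw [hsplit, ← mul_assoc, ENNReal.ofReal_mul' (by positivity),
      ← ofReal_measureReal]
    gcongr
    exact htail t (le_of_lt ht)

lemma integrable_rpow_of_tail_eq_mul_rpow_neg {Ω : Type*} [MeasurableSpace Ω] {μ : Measure Ω}
    [IsFiniteMeasure μ] {D : Ω → ℝ} (hD : Measurable D) (hD_nn : ∀ ω, 0 ≤ D ω)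
    {L : ℝ → ℝ} {γ β : ℝ} (hβ : 0 < β) (hβγ : β < γ)
    (hL : Tendsto (fun t => L (2 * t) / L t) atTop (𝓝 1))
    (htail : ∀ t > 0, (μ {ω | D ω > t}).toReal = L t * t ^ (-γ)) :
    Integrable (fun ω => D ω ^ β) μ := by
  have hanti : AntitoneOn (fun t => μ.real {ω | t < D ω}) (Ioi 0) := fun a _ b _ hab =>
    measureReal_mono fun ω (h : b < D ω) => hab.trans_lt h
  obtain ⟨C, T, hT, hC⟩ := exists_le_mul_rpow_neg_of_eq_mul_rpow_neg
    (p := (β + γ) / 2) (by linarith) (by linarith) (fun _ => measureReal_nonneg) hanti htail hL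
  exact integrable_rpow_of_tail_le_mul_rpow_neg hD hD_nn hβ (by linarith) hT hC

lemma ProbabilityTheory.IndepFun.integrable_mul_rpow {Ω : Type*} [MeasurableSpace Ω]
    {μ : Measure Ω} {X Y : Ω → ℝ} (hXY : ProbabilityTheory.IndepFun X Y μ)
    (hX_nn : ∀ ω, 0 ≤ X ω) (hY_nn : ∀ ω, 0 ≤ Y ω) {β : ℝ}
    (hX : Integrable (fun ω => X ω ^ β) μ) (hY : Integrable (fun ω => Y ω ^ β) μ) :
    Integrable (fun ω => (X ω * Y ω) ^ β) μ := by
  have hmeas : Measurable fun x : ℝ => x ^ β := by fun_prop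
  refine ((hXY.comp hmeas hmeas).integrable_mul hX hY).congr (ae_of_all _ fun ω => ?_)
  exact (Real.mul_rpow (hX_nn ω) (hY_nn ω)).symm

lemma integral_sub_one_add_exp_neg_div_le {Ω : Type*} [MeasurableSpace Ω] {μ : Measure Ω}
    {X : Ω → ℝ} (hX : Measurable X) (hX_nn : ∀ ω, 0 ≤ X ω) {β t : ℝ} (hβ1 : 1 ≤ β)
    (hβ2 : β ≤ 2) (ht : 0 < t) (hXβ : Integrable (fun ω => X ω ^ β) μ) :
    ∫ ω, (X ω / t - 1 + Real.exp (-(X ω / t))) ∂μ ≤ (∫ ω, X ω ^ β ∂μ) * t ^ (-β) := by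
  have hle : ∀ ω, X ω / t - 1 + Real.exp (-(X ω / t)) ≤ X ω ^ β * t ^ (-β) := fun ω => by
    rw [Real.rpow_neg ht.le, ← div_eq_mul_inv, ← Real.div_rpow (hX_nn ω) ht.le]
    exact sub_one_add_exp_neg_le_rpow (div_nonneg (hX_nn ω) ht.le) hβ1 hβ2
  have hmaj : Integrable (fun ω => X ω ^ β * t ^ (-β)) μ := hXβ.mul_const _
  have hint : Integrable (fun ω => X ω / t - 1 + Real.exp (-(X ω / t))) μ :=
    hmaj.mono' (by fun_prop) (ae_of_all _ fun ω => by
      rw [Real.norm_of_nonneg (sub_one_add_exp_neg_nonneg _)]; exact hle ω)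
  rw [← integral_mul_const]
  exact integral_mono hint hmaj hle

theorem stmt11_general {Ω : Type*} [MeasurableSpace Ω] (P : Measure Ω) [IsProbabilityMeasure P]
    (D₁ D₂ : Ω → ℝ) (h1 : Measurable D₁) (h2 : Measurable D₂)
    (hnn1 : ∀ ω, 0 ≤ D₁ ω) (hnn2 : ∀ ω, 0 ≤ D₂ ω)
    (hindep : ProbabilityTheory.IndepFun D₁ D₂ P)
    (γ : ℝ) (hγ1 : 1 < γ) (hγ2 : γ < 2)
    (L₁ L₂ : ℝ → ℝ)
    (hL1 : ∀ c > (0:ℝ), Tendsto (fun t => L₁ (c * t) / L₁ t) atTop (nhds 1))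
    (hL2 : ∀ c > (0:ℝ), Tendsto (fun t => L₂ (c * t) / L₂ t) atTop (nhds 1))
    (htail1 : ∀ t > (0:ℝ), (P {ω | D₁ ω > t}).toReal = L₁ t * t ^ (-γ))
    (htail2 : ∀ t > (0:ℝ), (P {ω | D₂ ω > t}).toReal = L₂ t * t ^ (-γ)) :
    ∀ δ > (0:ℝ),
      Tendsto (fun t : ℝ =>
          (∫ ω, (D₁ ω * D₂ ω / t - 1 + Real.exp (-(D₁ ω * D₂ ω / t))) ∂P) / t ^ (-γ + δ))
        atTop (nhds 0) := by
  intro δ hδ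
  obtain ⟨β, hβ, hβγ⟩ := exists_between (max_lt hγ1 (by linarith : γ - δ < γ))
  have hβ1 : 1 < β := (le_max_left _ _).trans_lt hβ
  have hβδ : γ - δ < β := (le_max_right _ _).trans_lt hβ
  have hmoment := hindep.integrable_mul_rpow hnn1 hnn2
    (integrable_rpow_of_tail_eq_mul_rpow_neg h1 hnn1 (by linarith) hβγ (hL1 2 two_pos) htail1)
    (integrable_rpow_of_tail_eq_mul_rpow_neg h2 hnn2 (by linarith) hβγ (hL2 2 two_pos) htail2)
  set K := ∫ ω, (D₁ ω * D₂ ω) ^ β ∂P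
  have hbound : Tendsto (fun t : ℝ => K * t ^ (-β) / t ^ (-γ + δ)) atTop (𝓝 0) := by
    have := (tendsto_rpow_neg_atTop (by linarith : 0 < β - γ + δ)).const_mul K
    rw [mul_zero] at this
    refine this.congr' ?_
    filter_upwards [eventually_gt_atTop 0] with t ht
    rw [mul_div_assoc, ← Real.rpow_sub ht]; ring_nf
  refine tendsto_of_tendsto_of_tendsto_of_le_of_le' tendsto_const_nhds hbound ?_ ?_
  all_goals filter_upwards [eventually_gt_atTop 0] with t ht
  · exact div_nonneg (integral_nonneg fun ω => sub_one_add_exp_neg_nonneg _) (by positivity)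
  · gcongr
    exact integral_sub_one_add_exp_neg_div_le (h1.mul h2) (fun ω => mul_nonneg (hnn1 ω) (hnn2 ω))
      hβ1.le (by linarith) ht hmoment

theorem stmt11 {Ω : Type*} [MeasurableSpace Ω] (P : Measure Ω) [IsProbabilityMeasure P]
    (D₁ D₂ : Ω → ℝ) (h1 : Measurable D₁) (h2 : Measurable D₂)
    (hnn1 : ∀ ω, 0 ≤ D₁ ω) (hnn2 : ∀ ω, 0 ≤ D₂ ω)
    (hindep : ProbabilityTheory.IndepFun D₁ D₂ P)
    (γ : ℝ) (hγ1 : 1 < γ) (hγ2 : γ < 2)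
    (L₁ L₂ : ℝ → ℝ)
    (hL1 : ∀ c > (0:ℝ), Tendsto (fun t => L₁ (c * t) / L₁ t) atTop (nhds 1))
    (hL2 : ∀ c > (0:ℝ), Tendsto (fun t => L₂ (c * t) / L₂ t) atTop (nhds 1))
    (htail1 : ∀ t > (0:ℝ), (P {ω | D₁ ω > t}).toReal = L₁ t * t ^ (-γ))
    (htail2 : ∀ t > (0:ℝ), (P {ω | D₂ ω > t}).toReal = L₂ t * t ^ (-γ))
    (hint1 : Integrable D₁ P) (hint2 : Integrable D₂ P) :
    ∀ δ > (0:ℝ),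
      Tendsto (fun t : ℝ =>
          (∫ ω, (D₁ ω * D₂ ω / t - 1 + Real.exp (-(D₁ ω * D₂ ω / t))) ∂P) / t ^ (-γ + δ))
        atTop (nhds 0) :=
  stmt11_general P D₁ D₂ h1 h2 hnn1 hnn2 hindep γ hγ1 hγ2 L₁ L₂ hL1 hL2 htail1 htail2
end
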